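/- arXiv:1910.00372 — 7 statements merged into one kernel-verified Lean document; each statement's English description precedes it below -/
import Mathlib

section
/- Let x* ∈ int(ℝ₊ⁿ) be an equilibrium of the QP system. Suppose there exist c₁,…,c_m > 0 such that, with C = diag(c₁,…,c_m), the matrix C·Q + Qᵀ·C is negative semidefinite. Then x* is Lyapunov stable: for every ε > 0 there exists δ > 0 such that every solution x : [0,∞) → int(ℝ₊ⁿ) of the QP system with ‖x(0) − x*‖ < δ satisfies ‖x(t) − x*‖ < ε for all t ≥ 0. -/
open Matrix Finset

/-- Quasimonomials: `φᵢ(x) = ∏ⱼ xⱼ ^ Bᵢⱼ` (real exponents). -/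
noncomputable def phi {n m : ℕ} (B : Matrix (Fin m) (Fin n) ℝ) (x : Fin n → ℝ) :
    Fin m → ℝ :=
  fun i => ∏ j, (x j) ^ (B i j)

namespace QPaux

noncomputable def LL {n m : ℕ} (B : Matrix (Fin m) (Fin n) ℝ) (y : Fin n → ℝ) (i : Fin m) : ℝ :=
  ∑ j, B i j * Real.log (y j)

noncomputable def VV {n m : ℕ} (B : Matrix (Fin m) (Fin n) ℝ) (c : Fin m → ℝ)
    (xs y : Fin n → ℝ) : ℝ :=
  ∑ i, c i * (Real.exp (LL B y i) - Real.exp (LL B xs i)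
      - Real.exp (LL B xs i) * (LL B y i - LL B xs i))

lemma phi_eq_exp {n m : ℕ} (B : Matrix (Fin m) (Fin n) ℝ) {y : Fin n → ℝ}
    (hy : ∀ j, 0 < y j) (i : Fin m) : phi B y i = Real.exp (LL B y i) := by
  unfold phi LL
  rw [Real.exp_sum]
  refine Finset.prod_congr rfl fun j _ => ?_
  rw [Real.rpow_def_of_pos (hy j), mul_comm]

lemma ent_nonneg (a b : ℝ) : 0 ≤ Real.exp a - Real.exp b - Real.exp b * (a - b) := by
  have h := Real.add_one_le_exp (a - b)
  have h2 : Real.exp b * ((a - b) + 1) ≤ Real.exp b * Real.exp (a - b) :=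
    mul_le_mul_of_nonneg_left h (Real.exp_pos b).le
  rw [← Real.exp_add] at h2
  have : b + (a - b) = a := by ring
  rw [this] at h2
  nlinarith [Real.exp_pos b]

lemma ent_pos {a b : ℝ} (hab : a ≠ b) :
    0 < Real.exp a - Real.exp b - Real.exp b * (a - b) := by
  have h := Real.add_one_lt_exp (sub_ne_zero.mpr hab)
  have h2 : Real.exp b * ((a - b) + 1) < Real.exp b * Real.exp (a - b) :=
    mul_lt_mul_of_pos_left h (Real.exp_pos b)
  rw [← Real.exp_add] at h2
  have : b + (a - b) = a := by ring
  rw [this] at h2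
  nlinarith [Real.exp_pos b]

lemma binj {n m : ℕ} {B : Matrix (Fin m) (Fin n) ℝ} (hB : B.rank = n) :
    Function.Injective B.mulVec := by
  have h := LinearMap.finrank_range_add_finrank_ker B.mulVecLin
  rw [Module.finrank_fin_fun] at h
  rw [Matrix.rank] at hB
  rw [hB] at h
  have hker : Module.finrank ℝ (LinearMap.ker B.mulVecLin) = 0 := by omega
  have : LinearMap.ker B.mulVecLin = ⊥ := Submodule.finrank_eq_zero.mp hker
  have hinj : Function.Injective B.mulVecLin := LinearMap.ker_eq_bot.mp this
  intro u v huv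
  apply hinj
  simpa [Matrix.mulVecLin_apply] using huv

lemma quad_id {m : ℕ} (Q : Matrix (Fin m) (Fin m) ℝ) (c v : Fin m → ℝ) :
    v ⬝ᵥ ((Matrix.diagonal c * Q + Qᵀ * Matrix.diagonal c).mulVec v)
      = 2 * ∑ i, c i * (v i * ∑ k, Q i k * v k) := by
  simp only [Matrix.mulVec, dotProduct, Matrix.add_apply,
    Matrix.diagonal_mul, Matrix.mul_diagonal, Matrix.transpose_apply,
    add_mul, mul_add, Finset.sum_add_distrib, Finset.mul_sum]
  have swap : ∑ x : Fin m, ∑ i : Fin m, v x * (Q i x * c i * v i)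
      = ∑ x : Fin m, ∑ i : Fin m, v x * (c x * Q x i * v i) := by
    rw [Finset.sum_comm]
    exact Finset.sum_congr rfl fun i _ => Finset.sum_congr rfl fun k _ => by ring
  rw [swap, ← two_mul, Finset.mul_sum]
  exact Finset.sum_congr rfl fun i _ => by
    rw [Finset.mul_sum]
    exact Finset.sum_congr rfl fun k _ => by ring


lemma V_self {n m : ℕ} (B : Matrix (Fin m) (Fin n) ℝ) (c : Fin m → ℝ) (xs : Fin n → ℝ) :
    VV B c xs xs = 0 := by simp [VV]

lemma V_nonneg {n m : ℕ} (B : Matrix (Fin m) (Fin n) ℝ) {c : Fin m → ℝ}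
    (hc : ∀ i, 0 < c i) (xs y : Fin n → ℝ) : 0 ≤ VV B c xs y :=
  Finset.sum_nonneg fun i _ => mul_nonneg (hc i).le (ent_nonneg _ _)

lemma V_pos {n m : ℕ} {B : Matrix (Fin m) (Fin n) ℝ} (hB : B.rank = n) {c : Fin m → ℝ}
    (hc : ∀ i, 0 < c i) {xs y : Fin n → ℝ} (hxs : ∀ j, 0 < xs j) (hy : ∀ j, 0 < y j)
    (hne : y ≠ xs) : 0 < VV B c xs y := by
  have hlog : (fun j => Real.log (y j)) ≠ (fun j => Real.log (xs j)) := by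
    intro h
    apply hne
    funext j
    have hj := congrFun h j
    calc y j = Real.exp (Real.log (y j)) := (Real.exp_log (hy j)).symm
      _ = Real.exp (Real.log (xs j)) := by rw [hj]
      _ = xs j := Real.exp_log (hxs j)
  have hBv : B.mulVec (fun j => Real.log (y j)) ≠ B.mulVec (fun j => Real.log (xs j)) :=
    fun h => hlog (binj hB h)
  obtain ⟨i, hi⟩ : ∃ i, LL B y i ≠ LL B xs i := by
    by_contra h
    push_neg at h
    apply hBv
    funext i
    simpa [Matrix.mulVec, dotProduct, LL] using h i
  refine Finset.sum_pos' (fun i _ => mul_nonneg (hc i).le (ent_nonneg _ _)) ⟨i, Finset.mem_univ i, ?_⟩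
  exact mul_pos (hc i) (ent_pos hi)

lemma V_contOn {n m : ℕ} (B : Matrix (Fin m) (Fin n) ℝ) (c : Fin m → ℝ) (xs : Fin n → ℝ) :
    ContinuousOn (VV B c xs) {y : Fin n → ℝ | ∀ j, 0 < y j} := by
  have hL : ∀ i, ContinuousOn (fun y : Fin n → ℝ => LL B y i)
      {y : Fin n → ℝ | ∀ j, 0 < y j} := by
    intro i
    apply continuousOn_finset_sum
    intro j _
    exact continuousOn_const.mul (Real.continuousOn_log.comp
      (continuous_apply j).continuousOn
      (fun y hy => Set.mem_compl_singleton_iff.mpr (ne_of_gt (hy j))))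
  apply continuousOn_finset_sum
  intro i _
  exact continuousOn_const.mul
    (((Real.continuous_exp.comp_continuousOn (hL i)).sub continuousOn_const).sub
      (continuousOn_const.mul ((hL i).sub continuousOn_const)))

lemma hasDeriv_V {n m : ℕ} (A : Matrix (Fin n) (Fin m) ℝ) (B : Matrix (Fin m) (Fin n) ℝ)
    (lam : Fin n → ℝ) (xs : Fin n → ℝ) (hxs : ∀ i, 0 < xs i)
    (heq : ∀ i, xs i * (lam i + ∑ j, A i j * phi B xs j) = 0)
    (c : Fin m → ℝ) (x : ℝ → (Fin n → ℝ))
    (hpos : ∀ t ∈ Set.Ici (0 : ℝ), ∀ i, 0 < x t i)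
    (hderiv : ∀ t ∈ Set.Ici (0 : ℝ), ∀ i, HasDerivWithinAt (fun s => x s i)
        (x t i * (lam i + ∑ j, A i j * phi B (x t) j)) (Set.Ici 0) t)
    (t : ℝ) (ht : t ∈ Set.Ici (0 : ℝ)) :
    HasDerivWithinAt (fun s => VV B c xs (x s))
      (∑ i, c i * ((Real.exp (LL B (x t) i) - Real.exp (LL B xs i)) *
        ∑ k, (B * A) i k * (Real.exp (LL B (x t) k) - Real.exp (LL B xs k))))
      (Set.Ici 0) t := by
  set z : Fin m → ℝ := fun k => Real.exp (LL B (x t) k) - Real.exp (LL B xs k) with hz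
  set D : Fin m → ℝ := fun i => ∑ k, (B * A) i k * z k with hD
  have hlam : ∀ j, lam j = -∑ k, A j k * phi B xs k := by
    intro j
    have h := (mul_eq_zero.mp (heq j)).resolve_left (ne_of_gt (hxs j))
    linarith
  have hE : ∀ j, lam j + ∑ k, A j k * phi B (x t) k = ∑ k, A j k * z k := by
    intro j
    rw [hlam j]
    rw [neg_add_eq_sub, ← Finset.sum_sub_distrib]
    refine Finset.sum_congr rfl fun k _ => ?_
    rw [phi_eq_exp B (fun j => hpos t ht j) k, phi_eq_exp B hxs k]
    ring
  have hlog : ∀ j, HasDerivWithinAt (fun s => Real.log (x s j)) (∑ k, A j k * z k)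
      (Set.Ici 0) t := by
    intro j
    have h := (hderiv t ht j).log (ne_of_gt (hpos t ht j))
    rw [mul_div_cancel_left₀ _ (ne_of_gt (hpos t ht j)), hE j] at h
    exact h
  have hLi : ∀ i, HasDerivWithinAt (fun s => LL B (x s) i) (D i) (Set.Ici 0) t := by
    intro i
    have h : HasDerivWithinAt (fun s => ∑ j, B i j * Real.log (x s j))
        (∑ j, B i j * ∑ k, A j k * z k) (Set.Ici 0) t :=
      HasDerivWithinAt.fun_sum fun j _ => (hlog j).const_mul (B i j)
    have hId : ∑ j, B i j * ∑ k, A j k * z k = D i := by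
      simp only [Finset.mul_sum]
      rw [Finset.sum_comm]
      refine Finset.sum_congr rfl fun k _ => ?_
      rw [Matrix.mul_apply, Finset.sum_mul]
      exact Finset.sum_congr rfl fun j _ => by ring
    rw [hId] at h
    exact h
  have hterm : ∀ i, HasDerivWithinAt (fun s => c i * (Real.exp (LL B (x s) i)
      - Real.exp (LL B xs i) - Real.exp (LL B xs i) * (LL B (x s) i - LL B xs i)))
      (c i * (z i * D i)) (Set.Ici 0) t := by
    intro i
    have h1 := (hLi i).exp
    have h2 := ((hLi i).sub_const (LL B xs i)).const_mul (Real.exp (LL B xs i))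
    have h3 := ((h1.sub_const (Real.exp (LL B xs i))).sub h2).const_mul (c i)
    have hval : c i * (Real.exp (LL B (x t) i) * D i - Real.exp (LL B xs i) * D i)
        = c i * (z i * D i) := by rw [hz]; ring
    rw [hval] at h3
    exact h3
  have h := HasDerivWithinAt.fun_sum (u := Finset.univ) fun i _ => hterm i
  have hfin : ∑ i, c i * (z i * D i) = ∑ i, c i * ((Real.exp (LL B (x t) i)
      - Real.exp (LL B xs i)) * ∑ k, (B * A) i k * (Real.exp (LL B (x t) k)
      - Real.exp (LL B xs k))) := rfl
  rw [hfin] at h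
  exact h

end QPaux

open QPaux

/-- If `x* ∈ int(ℝ₊ⁿ)` is an equilibrium of the QP system
`ẋᵢ = xᵢ (λᵢ + ∑ⱼ Aᵢⱼ φⱼ(x))` and there are `cᵢ > 0` with `C = diag(c)` such that
`C·Q + Qᵀ·C` is negative semidefinite (`Q = B·A`), then `x*` is Lyapunov stable. -/
theorem qp_stability {n m : ℕ} (hmn : n ≤ m)
    (A : Matrix (Fin n) (Fin m) ℝ) (B : Matrix (Fin m) (Fin n) ℝ)
    (hB : B.rank = n) (lam : Fin n → ℝ)
    (xs : Fin n → ℝ) (hxs : ∀ i, 0 < xs i)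
    (heq : ∀ i, xs i * (lam i + ∑ j, A i j * phi B xs j) = 0)
    (c : Fin m → ℝ) (hc : ∀ i, 0 < c i)
    (hneg : ∀ v : Fin m → ℝ,
      v ⬝ᵥ ((Matrix.diagonal c * (B * A) + (B * A)ᵀ * Matrix.diagonal c).mulVec v) ≤ 0) :
    ∀ ε > 0, ∃ δ > 0, ∀ x : ℝ → (Fin n → ℝ),
      (∀ t ∈ Set.Ici (0 : ℝ), ∀ i, 0 < x t i) →
      (∀ t ∈ Set.Ici (0 : ℝ), ∀ i, HasDerivWithinAt (fun s => x s i)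
        (x t i * (lam i + ∑ j, A i j * phi B (x t) j)) (Set.Ici 0) t) →
      ‖x 0 - xs‖ < δ → ∀ t ≥ (0 : ℝ), ‖x t - xs‖ < ε := by
  intro ε hε
  rcases Nat.eq_zero_or_pos n with hn | hn
  · -- trivial case n = 0
    subst hn
    refine ⟨ε, hε, fun x _ _ _ t _ => ?_⟩
    have : x t - xs = 0 := Subsingleton.elim _ _
    rw [this, norm_zero]
    exact hε
  haveI : Nonempty (Fin n) := ⟨⟨0, hn⟩⟩
  haveI : Nontrivial (Fin n → ℝ) := inferInstance
  -- a positive lower bound on xs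
  set μ : ℝ := Finset.univ.inf' Finset.univ_nonempty xs with hμ
  have hμpos : 0 < μ := by
    rw [hμ, Finset.lt_inf'_iff]
    exact fun j _ => hxs j
  have hμle : ∀ j, μ ≤ xs j := fun j => Finset.inf'_le _ (Finset.mem_univ j)
  set ε' : ℝ := min ε (μ / 2) with hε'
  have hε'pos : 0 < ε' := lt_min hε (by positivity)
  -- any point within μ/2 of xs is positive
  have hball : ∀ y : Fin n → ℝ, ‖y - xs‖ ≤ μ / 2 → ∀ j, 0 < y j := by
    intro y hy j
    have h1 : ‖(y - xs) j‖ ≤ ‖y - xs‖ := norm_le_pi_norm (y - xs) j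
    have h2 : |y j - xs j| ≤ μ / 2 := by
      rw [← Real.norm_eq_abs]
      calc ‖y j - xs j‖ = ‖(y - xs) j‖ := by simp
        _ ≤ ‖y - xs‖ := h1
        _ ≤ μ / 2 := hy
    have h3 := abs_le.mp h2
    have h4 := hμle j
    linarith [h3.1]
  set P : Set (Fin n → ℝ) := {y | ∀ j, 0 < y j} with hP
  have hxsP : xs ∈ P := hxs
  -- the sphere of radius ε'
  set S : Set (Fin n → ℝ) := Metric.sphere xs ε' with hS
  have hSP : S ⊆ P := by
    intro y hy
    have : ‖y - xs‖ = ε' := by rw [← dist_eq_norm]; exact hy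
    exact hball y (by rw [this]; exact min_le_right _ _) 
  have hScpt : IsCompact S := isCompact_sphere xs ε'
  have hSne : S.Nonempty := NormedSpace.sphere_nonempty.mpr hε'pos.le
  obtain ⟨a, haS, hamin⟩ := hScpt.exists_isMinOn hSne ((V_contOn B c xs).mono hSP)
  set α : ℝ := VV B c xs a with hα
  have hαpos : 0 < α := by
    refine V_pos hB hc hxs (hSP haS) ?_
    intro h
    have : dist a xs = ε' := haS
    rw [h, dist_self] at this
    exact absurd this.symm (ne_of_gt hε'pos)
  -- continuity of V at xs within P gives δ₁
  have hVc : ContinuousWithinAt (VV B c xs) P xs := (V_contOn B c xs) xs hxsP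
  rw [Metric.continuousWithinAt_iff] at hVc
  obtain ⟨δ₁, hδ₁pos, hδ₁⟩ := hVc α hαpos
  refine ⟨min δ₁ ε', lt_min hδ₁pos hε'pos, ?_⟩
  intro x hpos hderiv hx0 T hT
  -- V(x 0) < α
  have hx0P : x 0 ∈ P := hpos 0 Set.self_mem_Ici
  have hVx0 : VV B c xs (x 0) < α := by
    have hd : dist (x 0) xs < δ₁ := by
      rw [dist_eq_norm]
      exact lt_of_lt_of_le hx0 (min_le_left _ _)
    have := hδ₁ hx0P hd
    rw [V_self, dist_zero_right, Real.norm_eq_abs] at this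
    calc VV B c xs (x 0) ≤ |VV B c xs (x 0)| := le_abs_self _
      _ < α := this
  -- the Lyapunov function along the solution is antitone
  set g : ℝ → ℝ := fun s => VV B c xs (x s) with hg
  set F : ℝ → ℝ := fun t => ∑ i, c i * ((Real.exp (LL B (x t) i) - Real.exp (LL B xs i)) *
      ∑ k, (B * A) i k * (Real.exp (LL B (x t) k) - Real.exp (LL B xs k))) with hF
  have hderV : ∀ t ∈ Set.Ici (0:ℝ), HasDerivWithinAt g (F t) (Set.Ici 0) t :=
    fun t ht => hasDeriv_V A B lam xs hxs heq c x hpos hderiv t ht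
  have hFnonpos : ∀ t, F t ≤ 0 := by
    intro t
    set z : Fin m → ℝ := fun k => Real.exp (LL B (x t) k) - Real.exp (LL B xs k) with hzd
    have h1 := hneg z
    have h2 := quad_id (B * A) c z
    rw [h2] at h1
    have : F t = ∑ i, c i * (z i * ∑ k, (B * A) i k * z k) := by
      refine Finset.sum_congr rfl fun i _ => by ring
    rw [this]
    linarith
  have hcontg : ContinuousOn g (Set.Ici 0) := fun t ht => (hderV t ht).continuousWithinAt
  have hant : AntitoneOn g (Set.Ici 0) := by
    apply antitoneOn_of_hasDerivWithinAt_nonpos (convex_Ici 0) hcontg (f' := F)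
    · intro t ht
      rw [interior_Ici] at ht ⊢
      exact (hderV t (Set.Ioi_subset_Ici_self ht)).mono Set.Ioi_subset_Ici_self
    · intro t _
      exact hFnonpos t
  -- continuity of t ↦ ‖x t - xs‖
  have hxc : ContinuousOn x (Set.Ici 0) := by
    rw [continuousOn_pi]
    exact fun i t ht => (hderiv t ht i).continuousWithinAt
  have hrc : ContinuousOn (fun t => ‖x t - xs‖) (Set.Ici 0) :=
    (hxc.sub continuousOn_const).norm
  -- main claim: ‖x T - xs‖ < ε'
  have key : ‖x T - xs‖ < ε' := by
    by_contra hcon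
    push_neg at hcon
    have hr0 : ‖x 0 - xs‖ ≤ ε' := le_of_lt (lt_of_lt_of_le hx0 (min_le_right _ _))
    have hIVT := intermediate_value_Icc hT (hrc.mono (fun s hs => hs.1))
    have hmem : ε' ∈ Set.Icc (‖x 0 - xs‖) (‖x T - xs‖) := ⟨hr0, hcon⟩
    obtain ⟨τ, hτmem, hτ⟩ := hIVT hmem
    have hτIci : τ ∈ Set.Ici (0:ℝ) := hτmem.1
    have hxτS : x τ ∈ S := by
      rw [hS, Metric.mem_sphere, dist_eq_norm]
      exact hτ
    have h1 : α ≤ VV B c xs (x τ) := hamin hxτS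
    have h2 : g τ ≤ g 0 := hant Set.self_mem_Ici hτIci hτmem.1
    have h3 : g 0 = VV B c xs (x 0) := rfl
    have h4 : g τ = VV B c xs (x τ) := rfl
    linarith [hVx0]
  exact lt_of_lt_of_le key (min_le_left _ _)
end

section
/- Let x* ∈ int(ℝ₊ⁿ) be an equilibrium of the QP system. Suppose there exist c₁,…,c_m > 0 such that, with C = diag(c₁,…,c_m), the matrix C·Q + Qᵀ·C is negative definite. Then x* is globally asymptotically stable in int(ℝ₊ⁿ): x* is Lyapunov stable, and every solution x : [0,∞) → int(ℝ₊ⁿ) of the QP system satisfies x(t) → x* as t → ∞. -/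
open Matrix Finset Filter

open Real

/-- entropy-type bound: `(√(exp z) − √q)² ≤ exp z − q − q (z − log q)`. -/
lemma ent_lb (z q : ℝ) (hq : 0 < q) :
    (Real.sqrt (Real.exp z) - Real.sqrt q) ^ 2 ≤ Real.exp z - q - q * (z - Real.log q) := by
  set a := Real.sqrt (Real.exp z) with ha
  set b := Real.sqrt q with hb
  have hae : a ^ 2 = Real.exp z := Real.sq_sqrt (Real.exp_pos z).le
  have hbe : b ^ 2 = q := Real.sq_sqrt hq.le
  have hapos : 0 < a := Real.sqrt_pos.2 (Real.exp_pos z)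
  have hbpos : 0 < b := Real.sqrt_pos.2 hq
  have hz : z = 2 * Real.log a := by
    rw [← Real.log_exp z, ← hae, Real.log_pow]; push_cast; ring
  have hlq : Real.log q = 2 * Real.log b := by
    rw [← hbe, Real.log_pow]; push_cast; ring
  have key : Real.log (a / b) ≤ a / b - 1 := Real.log_le_sub_one_of_pos (by positivity)
  rw [Real.log_div hapos.ne' hbpos.ne'] at key
  have key2 : b ^ 2 * (Real.log a - Real.log b) ≤ b ^ 2 * (a / b - 1) := by
    nlinarith [sq_nonneg b]
  have : b ^ 2 * (a / b - 1) = a * b - b ^ 2 := by field_simp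
  rw [this] at key2
  have expand : Real.exp z - q - q * (z - Real.log q)
      = a ^ 2 - b ^ 2 - b ^ 2 * (2 * Real.log a - 2 * Real.log b) := by
    rw [← hae, hz, hlq, ← hbe]
  rw [expand]
  nlinarith [key2]

/-- upper bound: `s − q − q(log s − log q) ≤ (s−q)²/a` when `0 < a ≤ s`. -/
lemma ent_ub (s q a : ℝ) (hq : 0 < q) (ha : 0 < a) (has : a ≤ s) :
    s - q - q * (Real.log s - Real.log q) ≤ (s - q) ^ 2 / a := by
  have hs : 0 < s := lt_of_lt_of_le ha has
  have key : Real.log (q / s) ≤ q / s - 1 := Real.log_le_sub_one_of_pos (by positivity)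
  rw [Real.log_div hq.ne' hs.ne'] at key
  have h1 : s - q - q * (Real.log s - Real.log q) ≤ s - q + q * (q / s - 1) := by nlinarith
  have h2 : s - q + q * (q / s - 1) = (s - q) ^ 2 / s := by field_simp; ring
  rw [h2] at h1
  exact h1.trans (div_le_div_of_nonneg_left (sq_nonneg _) ha has)

/-- lower bound on `s` from entropy bound: -/
lemma ent_lower (s q M : ℝ) (hq : 0 < q) (hs : 0 < s)
    (h : s - q - q * (Real.log s - Real.log q) ≤ M) :
    q * Real.exp (-(M + q) / q) ≤ s := by
  have h1 : Real.log q - Real.log s ≤ (M + q) / q := by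
    rw [le_div_iff₀ hq]
    nlinarith
  have h2 : Real.log q - (M + q) / q ≤ Real.log s := by linarith
  calc q * Real.exp (-(M + q) / q) = Real.exp (Real.log q - (M + q) / q) := by
        rw [Real.exp_sub, Real.exp_log hq, neg_div, Real.exp_neg]
        field_simp
    _ ≤ Real.exp (Real.log s) := Real.exp_le_exp.2 h2
    _ = s := Real.exp_log hs

open Matrix Finset Filter
open Matrix Finset

lemma quad_identity {m : ℕ} (c v : Fin m → ℝ) (Q : Matrix (Fin m) (Fin m) ℝ) :
    ∑ j, c j * (v j * Q.mulVec v j)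
      = (1 / 2) * (v ⬝ᵥ ((Matrix.diagonal c * Q + Qᵀ * Matrix.diagonal c).mulVec v)) := by
  simp only [dotProduct, Matrix.mulVec, Matrix.add_apply, Matrix.diagonal_mul, Matrix.mul_diagonal,
    Matrix.transpose_apply]
  simp only [add_mul, Finset.sum_add_distrib, mul_add, Finset.mul_sum]
  have hC : ∑ i : Fin m, ∑ x : Fin m, v i * (Q x i * c x * v x)
      = ∑ i : Fin m, ∑ x : Fin m, v i * (c i * Q i x * v x) := by
    rw [Finset.sum_comm]
    exact Finset.sum_congr rfl fun i _ => Finset.sum_congr rfl fun x _ => by ring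
  have h2 : (∑ x : Fin m, ∑ i : Fin m, 1 / 2 * (v x * (Q i x * c i * v i)))
      = ∑ x : Fin m, ∑ i : Fin m, 1 / 2 * (v x * (c x * Q x i * v i)) := by
    rw [Finset.sum_comm]
    exact Finset.sum_congr rfl fun i _ => Finset.sum_congr rfl fun x _ => by ring
  rw [h2, ← Finset.sum_add_distrib]
  refine Finset.sum_congr rfl fun x _ => ?_
  rw [← Finset.sum_add_distrib]
  exact Finset.sum_congr rfl fun i _ => by ring

lemma antitone_aux (f f' : ℝ → ℝ)
    (hf : ∀ t ∈ Set.Ici (0:ℝ), HasDerivWithinAt f (f' t) (Set.Ici 0) t)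
    (h0 : ∀ t ∈ Set.Ici (0:ℝ), f' t ≤ 0) : AntitoneOn f (Set.Ici 0) := by
  apply antitoneOn_of_hasDerivWithinAt_nonpos (convex_Ici 0)
    (fun t ht => (hf t ht).continuousWithinAt) (f' := f')
  · intro t ht
    rw [interior_Ici] at ht ⊢
    exact ((hf t (Set.mem_Ici.2 (le_of_lt ht))).mono (Set.Ioi_subset_Ici le_rfl))
  · intro t ht
    rw [interior_Ici] at ht
    exact h0 t (Set.mem_Ici.2 (le_of_lt ht))

lemma quad_bound {m : ℕ} (hm : 0 < m) (M : Matrix (Fin m) (Fin m) ℝ)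
    (h : ∀ v : Fin m → ℝ, v ≠ 0 → v ⬝ᵥ M.mulVec v < 0) :
    ∃ α > 0, ∀ v : Fin m → ℝ, v ⬝ᵥ M.mulVec v ≤ -α * ‖v‖ ^ 2 := by
  have : Nonempty (Fin m) := ⟨⟨0, hm⟩⟩
  have hcont : Continuous fun v : Fin m → ℝ => v ⬝ᵥ M.mulVec v := by
    simp only [dotProduct, Matrix.mulVec]
    fun_prop
  have hsne : (Metric.sphere (0 : Fin m → ℝ) 1).Nonempty := by
    refine ⟨fun _ => 1, ?_⟩
    show dist _ _ = 1
    rw [dist_eq_norm, sub_zero, pi_norm_const]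
    simp
  obtain ⟨v₀, hv₀, hmax⟩ := (isCompact_sphere (0 : Fin m → ℝ) 1).exists_isMaxOn hsne
    hcont.continuousOn
  have hv₀n : ‖v₀‖ = 1 := by simpa [dist_eq_norm] using hv₀
  have hv₀0 : v₀ ≠ 0 := by intro h0; rw [h0] at hv₀n; simp at hv₀n
  refine ⟨-(v₀ ⬝ᵥ M.mulVec v₀), by linarith [h v₀ hv₀0], fun v => ?_⟩
  rcases eq_or_ne v 0 with rfl | hv
  · simp
  · have hnv : 0 < ‖v‖ := norm_pos_iff.2 hv
    set w : Fin m → ℝ := ‖v‖⁻¹ • v with hw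
    have hwmem : w ∈ Metric.sphere (0 : Fin m → ℝ) 1 := by
      show dist _ _ = 1
      rw [dist_eq_norm, sub_zero, hw, norm_smul, norm_inv, norm_norm, inv_mul_cancel₀ hnv.ne']
    have hkey : w ⬝ᵥ M.mulVec w ≤ v₀ ⬝ᵥ M.mulVec v₀ := hmax hwmem
    have hscale : v ⬝ᵥ M.mulVec v = ‖v‖ ^ 2 * (w ⬝ᵥ M.mulVec w) := by
      have hww : w ⬝ᵥ M.mulVec w = ‖v‖⁻¹ * (‖v‖⁻¹ * (v ⬝ᵥ M.mulVec v)) := by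
        rw [hw, smul_dotProduct, Matrix.mulVec_smul, dotProduct_smul, smul_eq_mul, smul_eq_mul]
      rw [hww]
      field_simp
    rw [hscale]
    nlinarith [hnv, sq_nonneg ‖v‖]
open Matrix Finset Filter


noncomputable def Vfun {n m : ℕ} (B : Matrix (Fin m) (Fin n) ℝ) (c q : Fin m → ℝ)
    (x : Fin n → ℝ) : ℝ :=
  ∑ j, c j * (phi B x j - q j - q j * (Real.log (phi B x j) - Real.log (q j)))

lemma phi_pos {n m : ℕ} (B : Matrix (Fin m) (Fin n) ℝ) (x : Fin n → ℝ) (hx : ∀ i, 0 < x i)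
    (j : Fin m) : 0 < phi B x j :=
  Finset.prod_pos fun k _ => Real.rpow_pos_of_pos (hx k) _

lemma phi_eq_exp {n m : ℕ} (B : Matrix (Fin m) (Fin n) ℝ) (x : Fin n → ℝ) (hx : ∀ i, 0 < x i)
    (j : Fin m) : phi B x j = Real.exp (∑ k, B j k * Real.log (x k)) := by
  rw [Real.exp_sum]
  exact Finset.prod_congr rfl fun k _ => by
    rw [Real.rpow_def_of_pos (hx k), mul_comm]

lemma ent_lb' (s q : ℝ) (hs : 0 < s) (hq : 0 < q) :
    (Real.sqrt s - Real.sqrt q) ^ 2 ≤ s - q - q * (Real.log s - Real.log q) := by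
  have := ent_lb (Real.log s) q hq
  rwa [Real.exp_log hs] at this

lemma Vfun_term_lb {n m : ℕ} (B : Matrix (Fin m) (Fin n) ℝ) (c q : Fin m → ℝ)
    (hc : ∀ j, 0 < c j) (hq : ∀ j, 0 < q j) (x : Fin n → ℝ) (hx : ∀ i, 0 < x i) (j : Fin m) :
    c j * (Real.sqrt (phi B x j) - Real.sqrt (q j)) ^ 2
      ≤ c j * (phi B x j - q j - q j * (Real.log (phi B x j) - Real.log (q j))) :=
  mul_le_mul_of_nonneg_left (ent_lb' _ _ (phi_pos B x hx j) (hq j)) (hc j).le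

lemma Vfun_lb {n m : ℕ} (B : Matrix (Fin m) (Fin n) ℝ) (c q : Fin m → ℝ)
    (hc : ∀ j, 0 < c j) (hq : ∀ j, 0 < q j) (x : Fin n → ℝ) (hx : ∀ i, 0 < x i) (j : Fin m) :
    c j * (Real.sqrt (phi B x j) - Real.sqrt (q j)) ^ 2 ≤ Vfun B c q x := by
  refine (Vfun_term_lb B c q hc hq x hx j).trans ?_
  exact Finset.single_le_sum (f := fun j' => c j' * (phi B x j' - q j' - q j' *
    (Real.log (phi B x j') - Real.log (q j')))) (fun j' _ =>
      le_trans (mul_nonneg (hc j').le (sq_nonneg _)) (Vfun_term_lb B c q hc hq x hx j'))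
    (Finset.mem_univ j)

lemma Vfun_nonneg {n m : ℕ} (B : Matrix (Fin m) (Fin n) ℝ) (c q : Fin m → ℝ)
    (hc : ∀ j, 0 < c j) (hq : ∀ j, 0 < q j) (x : Fin n → ℝ) (hx : ∀ i, 0 < x i) :
    0 ≤ Vfun B c q x :=
  Finset.sum_nonneg fun j _ => le_trans (mul_nonneg (hc j).le (sq_nonneg _))
    (Vfun_term_lb B c q hc hq x hx j)

lemma phi_continuousAt {n m : ℕ} (B : Matrix (Fin m) (Fin n) ℝ) (xs : Fin n → ℝ)
    (hxs : ∀ i, 0 < xs i) (j : Fin m) : ContinuousAt (fun x => phi B x j) xs := by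
  unfold phi
  apply tendsto_finset_prod
  intro k _
  have h1 : ContinuousAt (fun x : Fin n → ℝ => x k) xs := (continuous_apply k).continuousAt
  exact ContinuousAt.comp (x := xs) (f := fun x : Fin n → ℝ => x k)
    (Real.continuousAt_rpow_const (xs k) (B j k) (Or.inl (hxs k).ne')) h1

lemma Vfun_continuousAt {n m : ℕ} (B : Matrix (Fin m) (Fin n) ℝ) (c q : Fin m → ℝ)
    (hq : ∀ j, 0 < q j) (xs : Fin n → ℝ) (hxs : ∀ i, 0 < xs i)
    (hqx : ∀ j, phi B xs j = q j) :
    ContinuousAt (Vfun B c q) xs := by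
  unfold Vfun
  apply tendsto_finset_sum
  intro j _
  have hp := phi_continuousAt B xs hxs j
  have hl : ContinuousAt Real.log (phi B xs j) :=
    Real.continuousAt_log (phi_pos B xs hxs j).ne'
  have hlp : ContinuousAt (fun x : Fin n → ℝ => Real.log (phi B x j)) xs :=
    ContinuousAt.comp (x := xs) (f := fun x : Fin n → ℝ => phi B x j) hl hp
  exact (((hp.sub continuousAt_const).sub
    ((hlp.sub continuousAt_const).const_mul (q j))).const_mul (c j))

lemma Vfun_at_eq {n m : ℕ} (B : Matrix (Fin m) (Fin n) ℝ) (c q : Fin m → ℝ)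
    (xs : Fin n → ℝ) (hqx : ∀ j, phi B xs j = q j) : Vfun B c q xs = 0 := by
  unfold Vfun
  simp [hqx]
open Matrix Finset Filter


noncomputable def zf {n m : ℕ} (B : Matrix (Fin m) (Fin n) ℝ) (x : ℝ → Fin n → ℝ)
    (j : Fin m) (s : ℝ) : ℝ := ∑ k, B j k * Real.log (x s k)

noncomputable def gf {n m : ℕ} (B : Matrix (Fin m) (Fin n) ℝ) (c q : Fin m → ℝ)
    (x : ℝ → Fin n → ℝ) (s : ℝ) : ℝ :=
  ∑ j, c j * (Real.exp (zf B x j s) - q j - q j * (zf B x j s - Real.log (q j)))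

noncomputable def zdot {n m : ℕ} (A : Matrix (Fin n) (Fin m) ℝ) (B : Matrix (Fin m) (Fin n) ℝ)
    (lam : Fin n → ℝ) (x : ℝ → Fin n → ℝ) (j : Fin m) (t : ℝ) : ℝ :=
  ∑ k, B j k * (lam k + ∑ l, A k l * Real.exp (zf B x l t))

noncomputable def gd {n m : ℕ} (A : Matrix (Fin n) (Fin m) ℝ) (B : Matrix (Fin m) (Fin n) ℝ)
    (lam : Fin n → ℝ) (c q : Fin m → ℝ) (x : ℝ → Fin n → ℝ) (t : ℝ) : ℝ :=
  ∑ j, c j * ((Real.exp (zf B x j t) - q j) * zdot A B lam x j t)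

lemma phi_eq_exp' {n m : ℕ} (B : Matrix (Fin m) (Fin n) ℝ) (x : Fin n → ℝ) (hx : ∀ i, 0 < x i)
    (j : Fin m) : phi B x j = Real.exp (∑ k, B j k * Real.log (x k)) := by
  rw [Real.exp_sum]
  exact Finset.prod_congr rfl fun k _ => by
    rw [Real.rpow_def_of_pos (hx k), mul_comm]

lemma gf_hasDeriv {n m : ℕ} (A : Matrix (Fin n) (Fin m) ℝ) (B : Matrix (Fin m) (Fin n) ℝ)
    (lam : Fin n → ℝ) (c q : Fin m → ℝ) (x : ℝ → Fin n → ℝ)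
    (hpos : ∀ t ∈ Set.Ici (0:ℝ), ∀ i, 0 < x t i)
    (hderiv : ∀ t ∈ Set.Ici (0:ℝ), ∀ i, HasDerivWithinAt (fun s => x s i)
      (x t i * (lam i + ∑ j, A i j * phi B (x t) j)) (Set.Ici 0) t)
    (t : ℝ) (ht : t ∈ Set.Ici (0:ℝ)) :
    HasDerivWithinAt (gf B c q x) (gd A B lam c q x t) (Set.Ici 0) t := by
  have hxt := hpos t ht
  have hphi : ∀ l, phi B (x t) l = Real.exp (zf B x l t) := fun l => phi_eq_exp' B (x t) hxt l
  have hlog : ∀ k, HasDerivWithinAt (fun s => Real.log (x s k))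
      (lam k + ∑ l, A k l * Real.exp (zf B x l t)) (Set.Ici 0) t := by
    intro k
    have h1 := (hderiv t ht k).log (hxt k).ne'
    have h2 : x t k * (lam k + ∑ j, A k j * phi B (x t) j) / x t k
        = lam k + ∑ l, A k l * Real.exp (zf B x l t) := by
      rw [mul_div_cancel_left₀ _ (hxt k).ne']
      simp only [hphi]
    rwa [h2] at h1
  have hz : ∀ j, HasDerivWithinAt (fun s => zf B x j s) (zdot A B lam x j t) (Set.Ici 0) t := by
    intro j
    exact HasDerivWithinAt.fun_sum fun k _ => (hlog k).const_mul (B j k)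
  have hsum : HasDerivWithinAt
      (fun s => ∑ j, c j * (Real.exp (zf B x j s) - q j - q j * (zf B x j s - Real.log (q j))))
      (∑ j, c j * (Real.exp (zf B x j t) * zdot A B lam x j t - q j * zdot A B lam x j t))
      (Set.Ici 0) t := by
    apply HasDerivWithinAt.fun_sum
    intro j _
    exact (((hz j).exp.sub_const (q j)).sub
      (((hz j).sub_const (Real.log (q j))).const_mul (q j))).const_mul (c j)
  have heq : gd A B lam c q x t
      = ∑ j, c j * (Real.exp (zf B x j t) * zdot A B lam x j t - q j * zdot A B lam x j t) :=
    Finset.sum_congr rfl fun j _ => by ring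
  rw [heq]
  exact hsum

lemma gd_eq {n m : ℕ} (A : Matrix (Fin n) (Fin m) ℝ) (B : Matrix (Fin m) (Fin n) ℝ)
    (lam : Fin n → ℝ) (c q : Fin m → ℝ)
    (hlam : ∀ k, lam k = -∑ l, A k l * q l) (x : ℝ → Fin n → ℝ) (t : ℝ) :
    gd A B lam c q x t = ∑ j, c j * ((fun j' => Real.exp (zf B x j' t) - q j') j *
      ((B * A).mulVec (fun j' => Real.exp (zf B x j' t) - q j') j)) := by
  unfold gd
  refine Finset.sum_congr rfl fun j _ => ?_
  congr 1
  congr 1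
  unfold zdot
  simp only [Matrix.mulVec, Matrix.mul_apply, dotProduct]
  calc ∑ k, B j k * (lam k + ∑ l, A k l * Real.exp (zf B x l t))
      = ∑ k, ∑ l, B j k * (A k l * (Real.exp (zf B x l t) - q l)) := by
        refine Finset.sum_congr rfl fun k _ => ?_
        rw [hlam k, neg_add_eq_sub, ← Finset.sum_sub_distrib, Finset.mul_sum]
        exact Finset.sum_congr rfl fun l _ => by ring
    _ = ∑ l, (∑ k, B j k * A k l) * (Real.exp (zf B x l t) - q l) := by
        rw [Finset.sum_comm]
        refine Finset.sum_congr rfl fun l _ => ?_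
        rw [Finset.sum_mul]
        exact Finset.sum_congr rfl fun k _ => by ring

lemma Vdecay {n m : ℕ} (hm : 0 < m)
    (A : Matrix (Fin n) (Fin m) ℝ) (B : Matrix (Fin m) (Fin n) ℝ)
    (lam : Fin n → ℝ) (xs : Fin n → ℝ) (hxs : ∀ i, 0 < xs i)
    (heq : ∀ i, xs i * (lam i + ∑ j, A i j * phi B xs j) = 0)
    (c : Fin m → ℝ) (hc : ∀ i, 0 < c i)
    (hneg : ∀ v : Fin m → ℝ, v ≠ 0 →
      v ⬝ᵥ ((Matrix.diagonal c * (B * A) + (B * A)ᵀ * Matrix.diagonal c).mulVec v) < 0)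
    (x : ℝ → Fin n → ℝ)
    (hpos : ∀ t ∈ Set.Ici (0:ℝ), ∀ i, 0 < x t i)
    (hderiv : ∀ t ∈ Set.Ici (0:ℝ), ∀ i, HasDerivWithinAt (fun s => x s i)
      (x t i * (lam i + ∑ j, A i j * phi B (x t) j)) (Set.Ici 0) t) :
    ∃ β > 0, ∀ t ∈ Set.Ici (0:ℝ),
      Vfun B c (phi B xs) (x t) ≤ Vfun B c (phi B xs) (x 0) * Real.exp (-β * t) := by
  have hq : ∀ j, 0 < phi B xs j := phi_pos B xs hxs
  have hlam : ∀ k, lam k = -∑ l, A k l * phi B xs l := by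
    intro k
    have h := heq k
    rcases mul_eq_zero.1 h with h' | h'
    · exact absurd h' (hxs k).ne'
    · linarith
  obtain ⟨α, hα, hbound⟩ := quad_bound hm _ hneg
  -- gf equals Vfun along trajectory
  have hgf_eq : ∀ t ∈ Set.Ici (0:ℝ), Vfun B c (phi B xs) (x t) = gf B c (phi B xs) x t := by
    intro t ht
    unfold Vfun gf
    refine Finset.sum_congr rfl fun j _ => ?_
    rw [phi_eq_exp B (x t) (hpos t ht) j]
    rw [Real.log_exp]
    rfl
  -- derivative and its bound
  have hgd : ∀ t ∈ Set.Ici (0:ℝ), HasDerivWithinAt (gf B c (phi B xs) x)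
      (gd A B lam c (phi B xs) x t) (Set.Ici 0) t :=
    fun t ht => gf_hasDeriv A B lam c (phi B xs) x hpos hderiv t ht
  have hgd_le : ∀ t : ℝ, gd A B lam c (phi B xs) x t
      ≤ -(α/2) * ‖(fun j => Real.exp (zf B x j t) - phi B xs j)‖ ^ 2 := by
    intro t
    rw [gd_eq A B lam c (phi B xs) hlam x t, quad_identity]
    have := hbound (fun j => Real.exp (zf B x j t) - phi B xs j)
    nlinarith [this]
  have hgd0 : ∀ t ∈ Set.Ici (0:ℝ), gd A B lam c (phi B xs) x t ≤ 0 := by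
    intro t _
    refine (hgd_le t).trans ?_
    have : (0:ℝ) ≤ ‖(fun j => Real.exp (zf B x j t) - phi B xs j)‖ ^ 2 := sq_nonneg _
    nlinarith
  have hanti : AntitoneOn (gf B c (phi B xs) x) (Set.Ici 0) :=
    antitone_aux _ _ hgd hgd0
  have hmono : ∀ t ∈ Set.Ici (0:ℝ), gf B c (phi B xs) x t ≤ gf B c (phi B xs) x 0 :=
    fun t ht => hanti (Set.self_mem_Ici) ht ht
  -- nonnegativity of terms of gf
  have hterm_nonneg : ∀ (t : ℝ) (j : Fin m), 0 ≤ c j * (Real.exp (zf B x j t) - phi B xs j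
      - phi B xs j * (zf B x j t - Real.log (phi B xs j))) := by
    intro t j
    refine mul_nonneg (hc j).le (le_trans (sq_nonneg _) (ent_lb _ _ (hq j)))
  have hterm_le : ∀ (t : ℝ) (j : Fin m), c j * (Real.exp (zf B x j t) - phi B xs j
      - phi B xs j * (zf B x j t - Real.log (phi B xs j))) ≤ gf B c (phi B xs) x t := by
    intro t j
    exact Finset.single_le_sum (fun j' _ => hterm_nonneg t j') (Finset.mem_univ j)
  have hV0 : ∀ t ∈ Set.Ici (0:ℝ), ∀ j : Fin m, Real.exp (zf B x j t) - phi B xs j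
      - phi B xs j * (zf B x j t - Real.log (phi B xs j)) ≤ gf B c (phi B xs) x 0 / c j := by
    intro t ht j
    rw [le_div_iff₀ (hc j)]
    calc _ = c j * (Real.exp (zf B x j t) - phi B xs j
        - phi B xs j * (zf B x j t - Real.log (phi B xs j))) := by ring
      _ ≤ gf B c (phi B xs) x t := hterm_le t j
      _ ≤ gf B c (phi B xs) x 0 := hmono t ht
  -- lower bounds on exp (z j t)
  set V0 := gf B c (phi B xs) x 0 with hV0def
  set a : Fin m → ℝ := fun j => phi B xs j * Real.exp (-(V0 / c j + phi B xs j) / phi B xs j)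
    with hadef
  have ha : ∀ j, 0 < a j := fun j => mul_pos (hq j) (Real.exp_pos _)
  have hae : ∀ t ∈ Set.Ici (0:ℝ), ∀ j, a j ≤ Real.exp (zf B x j t) := by
    intro t ht j
    refine ent_lower _ _ _ (hq j) (Real.exp_pos _) ?_
    rw [Real.log_exp]
    exact hV0 t ht j
  -- K and β
  set K := ∑ j, c j / a j with hKdef
  have hne : Nonempty (Fin m) := ⟨⟨0, hm⟩⟩
  have hK : 0 < K := Finset.sum_pos (fun j _ => div_pos (hc j) (ha j)) univ_nonempty
  have hgfK : ∀ t ∈ Set.Ici (0:ℝ), gf B c (phi B xs) x t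
      ≤ K * ‖(fun j => Real.exp (zf B x j t) - phi B xs j)‖ ^ 2 := by
    intro t ht
    rw [hKdef, Finset.sum_mul]
    unfold gf
    refine Finset.sum_le_sum fun j _ => ?_
    have h1 : Real.exp (zf B x j t) - phi B xs j - phi B xs j *
        (zf B x j t - Real.log (phi B xs j)) ≤ (Real.exp (zf B x j t) - phi B xs j) ^ 2 / a j := by
      have := ent_ub (Real.exp (zf B x j t)) (phi B xs j) (a j) (hq j) (ha j) (hae t ht j)
      rwa [Real.log_exp] at this
    have h2 : (Real.exp (zf B x j t) - phi B xs j) ^ 2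
        ≤ ‖(fun j' => Real.exp (zf B x j' t) - phi B xs j')‖ ^ 2 := by
      have h3 := norm_le_pi_norm (fun j' => Real.exp (zf B x j' t) - phi B xs j') j
      rw [Real.norm_eq_abs] at h3
      calc (Real.exp (zf B x j t) - phi B xs j) ^ 2
          = |Real.exp (zf B x j t) - phi B xs j| ^ 2 := (sq_abs _).symm
        _ ≤ _ := by exact pow_le_pow_left₀ (abs_nonneg _) h3 2
    calc c j * (Real.exp (zf B x j t) - phi B xs j - phi B xs j *
          (zf B x j t - Real.log (phi B xs j)))
        ≤ c j * ((Real.exp (zf B x j t) - phi B xs j) ^ 2 / a j) :=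
          mul_le_mul_of_nonneg_left h1 (hc j).le
      _ = (c j / a j) * (Real.exp (zf B x j t) - phi B xs j) ^ 2 := by ring
      _ ≤ (c j / a j) * ‖(fun j' => Real.exp (zf B x j' t) - phi B xs j')‖ ^ 2 :=
          mul_le_mul_of_nonneg_left h2 (div_pos (hc j) (ha j)).le
  set β := α / (2 * K) with hβdef
  have hβ : 0 < β := div_pos hα (by linarith)
  refine ⟨β, hβ, ?_⟩
  have hgd_le2 : ∀ t ∈ Set.Ici (0:ℝ), gd A B lam c (phi B xs) x t
      ≤ -β * gf B c (phi B xs) x t := by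
    intro t ht
    have h1 := hgd_le t
    have h2 := hgfK t ht
    have h3 : β * gf B c (phi B xs) x t ≤ β * (K * ‖(fun j => Real.exp (zf B x j t)
        - phi B xs j)‖ ^ 2) := mul_le_mul_of_nonneg_left h2 hβ.le
    have h4 : β * K = α / 2 := by
      rw [hβdef]; field_simp
    nlinarith [h3, h1]
  -- exponential decay via G t = gf t * exp (β t)
  have hGd : ∀ t ∈ Set.Ici (0:ℝ), HasDerivWithinAt
      (fun s => gf B c (phi B xs) x s * Real.exp (β * s))
      (gd A B lam c (phi B xs) x t * Real.exp (β * t)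
        + gf B c (phi B xs) x t * (Real.exp (β * t) * β)) (Set.Ici 0) t := by
    intro t ht
    have hexp : HasDerivWithinAt (fun s : ℝ => Real.exp (β * s))
        (Real.exp (β * t) * β) (Set.Ici 0) t := by
      have := (((hasDerivWithinAt_id t (Set.Ici 0)).const_mul β)).exp
      simpa using this
    exact (hgd t ht).mul hexp
  have hGd0 : ∀ t ∈ Set.Ici (0:ℝ), gd A B lam c (phi B xs) x t * Real.exp (β * t)
      + gf B c (phi B xs) x t * (Real.exp (β * t) * β) ≤ 0 := by
    intro t ht
    have h1 := hgd_le2 t ht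
    have h2 := Real.exp_pos (β * t)
    nlinarith
  have hGanti : AntitoneOn (fun s => gf B c (phi B xs) x s * Real.exp (β * s)) (Set.Ici 0) :=
    antitone_aux _ _ hGd hGd0
  intro t ht
  have h1 : gf B c (phi B xs) x t * Real.exp (β * t) ≤ V0 := by
    have := hGanti (Set.self_mem_Ici) ht ht
    simpa using this
  rw [hgf_eq t ht, hgf_eq 0 Set.self_mem_Ici, ← hV0def]
  rw [neg_mul, Real.exp_neg, mul_comm V0 _, ← div_eq_inv_mul, le_div_iff₀ (Real.exp_pos _)]
  linarith

lemma exists_left_inverse {n m : ℕ} (B : Matrix (Fin m) (Fin n) ℝ) (hB : B.rank = n) :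
    ∃ g : (Fin m → ℝ) →ₗ[ℝ] (Fin n → ℝ), Continuous g ∧ ∀ u, g (B.mulVec u) = u := by
  have hinj : Function.Injective B.mulVecLin := by
    rw [← LinearMap.ker_eq_bot]
    have hrn := LinearMap.finrank_range_add_finrank_ker B.mulVecLin
    rw [Matrix.rank] at hB
    have hdom : Module.finrank ℝ (Fin n → ℝ) = n := Module.finrank_fin_fun ℝ
    rw [hdom, hB] at hrn
    have : Module.finrank ℝ (LinearMap.ker B.mulVecLin) = 0 := by omega
    exact Submodule.finrank_eq_zero.1 this
  obtain ⟨g, hg⟩ := B.mulVecLin.exists_leftInverse_of_injective (LinearMap.ker_eq_bot.2 hinj)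
  refine ⟨g, g.continuous_of_finiteDimensional, fun u => ?_⟩
  have := LinearMap.congr_fun hg u
  simpa using this

lemma dist_lt_aux {m : ℕ} (c w w' : Fin m → ℝ) (hc : ∀ j, 0 < c j) (V ε : ℝ) (hε : 0 < ε)
    (hV : ∀ j, c j * (w j - w' j) ^ 2 ≤ V) (hsmall : ∀ j, V < c j * ε ^ 2) :
    dist w w' < ε := by
  rw [dist_pi_lt_iff hε]
  intro j
  rw [Real.dist_eq]
  have h1 : (w j - w' j) ^ 2 < ε ^ 2 := by nlinarith [hc j, hV j, hsmall j]
  exact abs_lt_of_sq_lt_sq h1 hε.le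

/-- If `x* ∈ int(ℝ₊ⁿ)` is an equilibrium of the QP system
`ẋᵢ = xᵢ (λᵢ + ∑ⱼ Aᵢⱼ φⱼ(x))` and there are `cᵢ > 0` with `C = diag(c)` such that
`C·Q + Qᵀ·C` is negative definite (`Q = B·A`), then `x*` is globally asymptotically
stable in `int(ℝ₊ⁿ)`: it is Lyapunov stable and every solution `x : [0,∞) → int(ℝ₊ⁿ)`
satisfies `x(t) → x*` as `t → ∞`. -/
theorem qp_global_asymptotic_stability {n m : ℕ} (hmn : n ≤ m)
    (A : Matrix (Fin n) (Fin m) ℝ) (B : Matrix (Fin m) (Fin n) ℝ)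
    (hB : B.rank = n) (lam : Fin n → ℝ)
    (xs : Fin n → ℝ) (hxs : ∀ i, 0 < xs i)
    (heq : ∀ i, xs i * (lam i + ∑ j, A i j * phi B xs j) = 0)
    (c : Fin m → ℝ) (hc : ∀ i, 0 < c i)
    (hneg : ∀ v : Fin m → ℝ, v ≠ 0 →
      v ⬝ᵥ ((Matrix.diagonal c * (B * A) + (B * A)ᵀ * Matrix.diagonal c).mulVec v) < 0) :
    (∀ ε > 0, ∃ δ > 0, ∀ x : ℝ → (Fin n → ℝ),
      (∀ t ∈ Set.Ici (0 : ℝ), ∀ i, 0 < x t i) →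
      (∀ t ∈ Set.Ici (0 : ℝ), ∀ i, HasDerivWithinAt (fun s => x s i)
        (x t i * (lam i + ∑ j, A i j * phi B (x t) j)) (Set.Ici 0) t) →
      ‖x 0 - xs‖ < δ → ∀ t ≥ (0 : ℝ), ‖x t - xs‖ < ε) ∧
    (∀ x : ℝ → (Fin n → ℝ),
      (∀ t ∈ Set.Ici (0 : ℝ), ∀ i, 0 < x t i) →
      (∀ t ∈ Set.Ici (0 : ℝ), ∀ i, HasDerivWithinAt (fun s => x s i)
        (x t i * (lam i + ∑ j, A i j * phi B (x t) j)) (Set.Ici 0) t) →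
      Tendsto x atTop (nhds xs)) := by
  rcases Nat.eq_zero_or_pos n with hn0 | hn
  · -- trivial case n = 0
    subst hn0
    have huniq : ∀ y z : Fin 0 → ℝ, y = z := fun y z => Subsingleton.elim y z
    constructor
    · intro ε hε
      refine ⟨1, one_pos, fun x _ _ _ t _ => ?_⟩
      rw [huniq (x t) xs, sub_self, norm_zero]
      exact hε
    · intro x _ _
      have : x = fun _ => xs := funext fun t => huniq _ _
      rw [this]
      exact tendsto_const_nhds
  · have hm : 0 < m := lt_of_lt_of_le hn hmn
    have hne : Nonempty (Fin m) := ⟨⟨0, hm⟩⟩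
    have hq : ∀ j, 0 < phi B xs j := phi_pos B xs hxs
    obtain ⟨gL, hgLc, hgL⟩ := exists_left_inverse B hB
    set w0 : Fin m → ℝ := fun j => Real.sqrt (phi B xs j) with hw0
    set Ψ : (Fin m → ℝ) → (Fin n → ℝ) :=
      fun w i => Real.exp (gL (fun j => Real.log ((w j) ^ 2)) i) with hΨ
    -- Ψ recovers positive points from sqrt-quasimonomials
    have hΨx : ∀ y : Fin n → ℝ, (∀ i, 0 < y i) →
        Ψ (fun j => Real.sqrt (phi B y j)) = y := by
      intro y hy
      funext i
      have h1 : (fun j => Real.log ((Real.sqrt (phi B y j)) ^ 2))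
          = B.mulVec (fun k => Real.log (y k)) := by
        funext j
        rw [Real.sq_sqrt (phi_pos B y hy j).le, phi_eq_exp B y hy j, Real.log_exp]
        rfl
      show Real.exp (gL (fun j => Real.log ((Real.sqrt (phi B y j)) ^ 2)) i) = y i
      rw [h1, hgL]
      exact Real.exp_log (hy i)
    have hΨw0 : Ψ w0 = xs := hΨx xs hxs
    -- continuity of Ψ at w0
    have hinner : ContinuousAt (fun w : Fin m → ℝ => (fun j => Real.log ((w j) ^ 2))) w0 := by
      rw [continuousAt_pi]
      intro j
      have h1 : ContinuousAt (fun w : Fin m → ℝ => (w j) ^ 2) w0 :=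
        ((continuous_apply j).pow 2).continuousAt
      have h2 : ContinuousAt Real.log ((w0 j) ^ 2) := by
        apply Real.continuousAt_log
        rw [hw0, Real.sq_sqrt (hq j).le]
        exact (hq j).ne'
      exact ContinuousAt.comp (x := w0) (f := fun w : Fin m → ℝ => (w j) ^ 2) h2 h1
    have hΨcont : ContinuousAt Ψ w0 := by
      rw [hΨ, continuousAt_pi]
      intro i
      have h3 : ContinuousAt (fun w : Fin m → ℝ => gL (fun j => Real.log ((w j) ^ 2))) w0 :=
        ContinuousAt.comp (x := w0) hgLc.continuousAt hinner
      have h4 : ContinuousAt (fun w : Fin m → ℝ => gL (fun j => Real.log ((w j) ^ 2)) i) w0 :=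
        ContinuousAt.comp (x := w0) (continuous_apply i).continuousAt h3
      exact ContinuousAt.comp (x := w0)
        (f := fun w : Fin m → ℝ => gL (fun j => Real.log ((w j) ^ 2)) i)
        Real.continuous_exp.continuousAt h4
    -- minimum of c
    set cmin := Finset.univ.inf' Finset.univ_nonempty c with hcmin
    have hcmin_pos : 0 < cmin := by
      rw [hcmin, Finset.lt_inf'_iff]
      exact fun j _ => hc j
    have hcmin_le : ∀ j, cmin ≤ c j := fun j => Finset.inf'_le c (Finset.mem_univ j)
    -- the bridge: small Vfun implies closeness
    have hbridge : ∀ (y : Fin n → ℝ), (∀ i, 0 < y i) → ∀ δ₂ : ℝ, 0 < δ₂ →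
        Vfun B c (phi B xs) y < cmin * δ₂ ^ 2 →
        dist (fun j => Real.sqrt (phi B y j)) w0 < δ₂ := by
      intro y hy δ₂ hδ₂ hsmall
      apply dist_lt_aux c _ _ hc (Vfun B c (phi B xs) y) δ₂ hδ₂
      · intro j
        exact Vfun_lb B c (phi B xs) hc hq y hy j
      · intro j
        calc Vfun B c (phi B xs) y < cmin * δ₂ ^ 2 := hsmall
          _ ≤ c j * δ₂ ^ 2 := by nlinarith [hcmin_le j, sq_nonneg δ₂, hδ₂]
    constructor
    · -- Lyapunov stability
      intro ε hε
      obtain ⟨δ₂, hδ₂, hball⟩ := Metric.continuousAt_iff.1 hΨcont ε hε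
      set η := cmin * δ₂ ^ 2 with hη
      have hηpos : 0 < η := by positivity
      have hVc : ContinuousAt (Vfun B c (phi B xs)) xs :=
        Vfun_continuousAt B c (phi B xs) hq xs hxs (fun j => rfl)
      obtain ⟨δ, hδ, hVball⟩ := Metric.continuousAt_iff.1 hVc η hηpos
      refine ⟨δ, hδ, ?_⟩
      intro x hpos hderiv hx0 t ht
      have ht' : t ∈ Set.Ici (0:ℝ) := ht
      obtain ⟨β, hβ, hdecay⟩ := Vdecay hm A B lam xs hxs heq c hc hneg x hpos hderiv
      have hV0 : Vfun B c (phi B xs) (x 0) < η := by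
        have := hVball (by rwa [dist_eq_norm])
        rw [Vfun_at_eq B c (phi B xs) xs (fun j => rfl), dist_zero_right] at this
        exact lt_of_le_of_lt (le_abs_self _) this
      have hV0nn : 0 ≤ Vfun B c (phi B xs) (x 0) :=
        Vfun_nonneg B c (phi B xs) hc hq (x 0) (hpos 0 Set.self_mem_Ici)
      have hVt : Vfun B c (phi B xs) (x t) < η := by
        have h1 := hdecay t ht'
        have h2 : Real.exp (-β * t) ≤ 1 := by
          rw [Real.exp_le_one_iff]
          nlinarith
        nlinarith
      have := hbridge (x t) (hpos t ht') δ₂ hδ₂ hVt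
      have h5 := hball this
      rw [hΨx (x t) (hpos t ht'), hΨw0, dist_eq_norm] at h5
      exact h5
    · -- convergence
      intro x hpos hderiv
      obtain ⟨β, hβ, hdecay⟩ := Vdecay hm A B lam xs hxs heq c hc hneg x hpos hderiv
      set V0 := Vfun B c (phi B xs) (x 0) with hV0def
      have htend0 : Tendsto (fun t : ℝ => V0 * Real.exp (-β * t)) atTop (nhds 0) := by
        have h1 : Tendsto (fun t : ℝ => -β * t) atTop atBot :=
          tendsto_id.const_mul_atTop_of_neg (by linarith)
        have h2 := Real.tendsto_exp_atBot.comp h1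
        have := h2.const_mul V0
        simpa using this
      have hwt : Tendsto (fun t => (fun j => Real.sqrt (phi B (x t) j))) atTop (nhds w0) := by
        rw [Metric.tendsto_atTop]
        intro ε hε
        set η := cmin * ε ^ 2 with hη
        have hηpos : 0 < η := by positivity
        have hev : ∀ᶠ t : ℝ in atTop, V0 * Real.exp (-β * t) < η :=
          htend0.eventually_lt_const hηpos
        have hev2 := hev.and (eventually_ge_atTop (0:ℝ))
        obtain ⟨N, hN⟩ := eventually_atTop.1 hev2
        refine ⟨N, fun t htN => ?_⟩
        obtain ⟨hlt, ht0⟩ := hN t htN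
        have hVt : Vfun B c (phi B xs) (x t) < η := lt_of_le_of_lt (hdecay t ht0) hlt
        exact hbridge (x t) (hpos t ht0) ε hε hVt
      have hcomp : Tendsto (fun t => Ψ (fun j => Real.sqrt (phi B (x t) j))) atTop (nhds xs) := by
        have := hΨcont.tendsto.comp hwt
        rwa [hΨw0] at this
      apply hcomp.congr'
      filter_upwards [eventually_ge_atTop (0:ℝ)] with t ht
      exact hΨx (x t) (hpos t ht)
end

section
/- Let x* ∈ int(ℝ₊ⁿ) be an equilibrium of the QP system, let c₁,…,c_m > 0, C = diag(c₁,…,c_m), and let W(x) = Σ_{i=1}^m cᵢ [ φᵢ(x) − φᵢ(x*) − φᵢ(x*)·ln( φᵢ(x)/φᵢ(x*) ) ]. Then for every solution x : I → int(ℝ₊ⁿ) of the QP system and every t ∈ I, d/dt W(x(t)) = (1/2) (φ(x(t)) − φ(x*))ᵀ (C·Q + Qᵀ·C) (φ(x(t)) − φ(x*)), where φ(x) = (φ₁(x),…,φ_m(x))ᵀ. -/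
open Matrix Finset

lemma qp_alg {m : ℕ} (c : Fin m → ℝ) (Q : Matrix (Fin m) (Fin m) ℝ) (v : Fin m → ℝ) :
    (1/2) * (v ⬝ᵥ ((Matrix.diagonal c * Q + Qᵀ * Matrix.diagonal c).mulVec v))
      = ∑ i, c i * v i * (Q.mulVec v i) := by
  simp only [Matrix.add_mulVec, dotProduct_add, Matrix.mulVec, dotProduct,
    Matrix.mul_apply, Matrix.diagonal_apply, Matrix.transpose_apply]
  simp [Finset.sum_ite_eq, Finset.sum_ite_eq', Finset.mul_sum, Finset.sum_mul]
  rw [Finset.sum_comm (γ := Fin m)]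
  ring_nf
  simp_rw [Finset.sum_add_distrib]
  rw [Finset.sum_comm (γ := Fin m) (f := fun x y => v y * c y * Q y x * v x * (1/2))]
  rw [← Finset.sum_add_distrib]
  simp_rw [← Finset.sum_add_distrib]
  apply Finset.sum_congr rfl; intro i _
  apply Finset.sum_congr rfl; intro k _
  ring

/-- Along any solution `x : I → int(ℝ₊ⁿ)` of the QP system with equilibrium
`x* ∈ int(ℝ₊ⁿ)`, the Liapunov function
`W(x) = ∑ᵢ cᵢ (φᵢ(x) − φᵢ(x*) − φᵢ(x*)·ln(φᵢ(x)/φᵢ(x*)))` satisfies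
`d/dt W(x(t)) = ½ (φ(x(t)) − φ(x*))ᵀ (C·Q + Qᵀ·C) (φ(x(t)) − φ(x*))`,
where `Q = B·A` and `C = diag(c)`. -/
theorem qp_liapunov_derivative {n m : ℕ} (hmn : n ≤ m)
    (A : Matrix (Fin n) (Fin m) ℝ) (B : Matrix (Fin m) (Fin n) ℝ)
    (hB : B.rank = n) (lam : Fin n → ℝ)
    (xs : Fin n → ℝ) (hxs : ∀ i, 0 < xs i)
    (heq : ∀ i, xs i * (lam i + ∑ j, A i j * phi B xs j) = 0)
    (c : Fin m → ℝ) (hc : ∀ i, 0 < c i)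
    (I : Set ℝ) (hI : I.OrdConnected) (x : ℝ → (Fin n → ℝ))
    (hpos : ∀ t ∈ I, ∀ i, 0 < x t i)
    (hsol : ∀ t ∈ I, ∀ i, HasDerivWithinAt (fun s => x s i)
      (x t i * (lam i + ∑ j, A i j * phi B (x t) j)) I t) :
    ∀ t ∈ I, HasDerivWithinAt (fun s => ∑ i, c i * (phi B (x s) i - phi B xs i -
        phi B xs i * Real.log (phi B (x s) i / phi B xs i)))
      ((1 / 2) * ((phi B (x t) - phi B xs) ⬝ᵥ
        ((Matrix.diagonal c * (B * A) + (B * A)ᵀ * Matrix.diagonal c).mulVec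
          (phi B (x t) - phi B xs)))) I t := by
  intro t ht
  have hφs : ∀ i, 0 < phi B xs i := fun i =>
    Finset.prod_pos fun j _ => Real.rpow_pos_of_pos (hxs j) _
  have hφpos : ∀ s ∈ I, ∀ i, 0 < phi B (x s) i := fun s hs i =>
    Finset.prod_pos fun j _ => Real.rpow_pos_of_pos (hpos s hs j) _
  have hlam : ∀ j, lam j = -∑ k, A j k * phi B xs k := by
    intro j
    have h := heq j
    have h2 : lam j + ∑ k, A j k * phi B xs k = 0 := by
      rcases mul_eq_zero.mp h with h' | h'
      · exact absurd h' (hxs j).ne'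
      · exact h'
    linarith
  set L : Fin m → ℝ → ℝ := fun i s => ∑ j, B i j * Real.log (x s j) with hLdef
  have hexpL : ∀ s ∈ I, ∀ i, Real.exp (L i s) = phi B (x s) i := by
    intro s hs i
    rw [hLdef, Real.exp_sum]
    exact Finset.prod_congr rfl fun j _ => by
      rw [mul_comm, ← Real.rpow_def_of_pos (hpos s hs j)]
  set ℓ : Fin m → ℝ := fun i => ∑ j, B i j * (lam j + ∑ k, A j k * phi B (x t) k) with hℓdef
  have hderivL : ∀ i, HasDerivWithinAt (L i) (ℓ i) I t := by
    intro i
    apply HasDerivWithinAt.fun_sum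
    intro j _
    have hlog := (hsol t ht j).log (hpos t ht j).ne'
    rw [mul_div_cancel_left₀ _ (hpos t ht j).ne'] at hlog
    exact hlog.const_mul (B i j)
  set D : ℝ := ∑ i, c i * ((phi B (x t) i - phi B xs i) * ℓ i) with hDdef
  have hg : HasDerivWithinAt (fun s => ∑ i, c i *
      (Real.exp (L i s) - phi B xs i - phi B xs i * (L i s - Real.log (phi B xs i)))) D I t := by
    apply HasDerivWithinAt.fun_sum
    intro i _
    have h := ((((hderivL i).exp).sub_const (phi B xs i)).fun_sub
      (((hderivL i).sub_const (Real.log (phi B xs i))).const_mul (phi B xs i))).const_mul (c i)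
    convert h using 1
    · rfl
    rw [hexpL t ht i]
    ring
  have hfun : HasDerivWithinAt (fun s => ∑ i, c i * (phi B (x s) i - phi B xs i -
      phi B xs i * Real.log (phi B (x s) i / phi B xs i))) D I t := by
    apply hg.congr
    · intro s hs
      apply Finset.sum_congr rfl
      intro i _
      rw [← hexpL s hs i, Real.log_div (by rw [hexpL s hs i]; exact (hφpos s hs i).ne')
        (hφs i).ne', Real.log_exp]
    · apply Finset.sum_congr rfl
      intro i _
      rw [← hexpL t ht i, Real.log_div (by rw [hexpL t ht i]; exact (hφpos t ht i).ne')
        (hφs i).ne', Real.log_exp]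
  convert hfun using 1
  rw [qp_alg c (B * A) (phi B (x t) - phi B xs), hDdef]
  apply Finset.sum_congr rfl
  intro i _
  have hℓ : ℓ i = (B * A).mulVec (phi B (x t) - phi B xs) i := by
    rw [hℓdef]
    simp only [Matrix.mulVec, dotProduct, Matrix.mul_apply, Pi.sub_apply]
    have hstep : ∀ j, lam j + ∑ k, A j k * phi B (x t) k
        = ∑ k, A j k * (phi B (x t) k - phi B xs k) := by
      intro j
      rw [hlam j, neg_add_eq_sub, ← Finset.sum_sub_distrib]
      exact Finset.sum_congr rfl fun k _ => (mul_sub _ _ _).symm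
    simp_rw [hstep, Finset.mul_sum, Finset.sum_mul]
    rw [Finset.sum_comm]
    apply Finset.sum_congr rfl
    intro k _
    apply Finset.sum_congr rfl
    intro j _
    ring
  rw [hℓ]
  simp [Pi.sub_apply]
  ring
end

section
/- Let x* ∈ int(ℝ₊ⁿ) be an equilibrium of the QP system, and suppose there exist c₁,…,c_m > 0 such that, with C = diag(c₁,…,c_m), the matrix C·Q + Qᵀ·C is negative semidefinite. Then along every solution x : I → int(ℝ₊ⁿ) of the QP system, the function t ↦ W(x(t)) is nonincreasing, where W(x) = Σ_{i=1}^m cᵢ [ φᵢ(x) − φᵢ(x*) − φᵢ(x*)·ln( φᵢ(x)/φᵢ(x*) ) ]. -/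
open Matrix Finset

lemma qp_key {m : ℕ} (Q : Matrix (Fin m) (Fin m) ℝ) (c z : Fin m → ℝ)
    (h : z ⬝ᵥ ((Matrix.diagonal c * Q + Qᵀ * Matrix.diagonal c).mulVec z) ≤ 0) :
    ∑ i, c i * z i * Q.mulVec z i ≤ 0 := by
  have h1 : z ⬝ᵥ ((Qᵀ * Matrix.diagonal c).mulVec z)
      = z ⬝ᵥ ((Matrix.diagonal c * Q).mulVec z) := by
    have : Qᵀ * Matrix.diagonal c = (Matrix.diagonal c * Q)ᵀ := by
      rw [Matrix.transpose_mul, Matrix.diagonal_transpose]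
    rw [this, Matrix.mulVec_transpose, Matrix.dotProduct_mulVec, dotProduct_comm]
  rw [Matrix.add_mulVec, dotProduct_add, h1] at h
  have h2 : z ⬝ᵥ ((Matrix.diagonal c * Q).mulVec z) = ∑ i, c i * z i * Q.mulVec z i := by
    rw [← Matrix.mulVec_mulVec]
    simp [dotProduct, Matrix.mulVec_diagonal]
    exact Finset.sum_congr rfl fun i _ => by ring
  rw [h2] at h
  linarith

/-- If `x* ∈ int(ℝ₊ⁿ)` is an equilibrium of the QP system and `C·Q + Qᵀ·C` is
negative semidefinite for some positive diagonal `C = diag(c)` (`Q = B·A`), then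
`t ↦ W(x(t))` is nonincreasing along every solution `x : I → int(ℝ₊ⁿ)`, where
`W(x) = ∑ᵢ cᵢ (φᵢ(x) − φᵢ(x*) − φᵢ(x*)·ln(φᵢ(x)/φᵢ(x*)))`. -/
theorem qp_liapunov_nonincreasing {n m : ℕ} (hmn : n ≤ m)
    (A : Matrix (Fin n) (Fin m) ℝ) (B : Matrix (Fin m) (Fin n) ℝ)
    (hB : B.rank = n) (lam : Fin n → ℝ)
    (xs : Fin n → ℝ) (hxs : ∀ i, 0 < xs i)
    (heq : ∀ i, xs i * (lam i + ∑ j, A i j * phi B xs j) = 0)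
    (c : Fin m → ℝ) (hc : ∀ i, 0 < c i)
    (hneg : ∀ v : Fin m → ℝ,
      v ⬝ᵥ ((Matrix.diagonal c * (B * A) + (B * A)ᵀ * Matrix.diagonal c).mulVec v) ≤ 0)
    (I : Set ℝ) (hI : I.OrdConnected) (x : ℝ → (Fin n → ℝ))
    (hpos : ∀ t ∈ I, ∀ i, 0 < x t i)
    (hsol : ∀ t ∈ I, ∀ i, HasDerivWithinAt (fun s => x s i)
      (x t i * (lam i + ∑ j, A i j * phi B (x t) j)) I t) :
    ∀ s ∈ I, ∀ t ∈ I, s ≤ t →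
      (∑ i, c i * (phi B (x t) i - phi B xs i -
        phi B xs i * Real.log (phi B (x t) i / phi B xs i))) ≤
      (∑ i, c i * (phi B (x s) i - phi B xs i -
        phi B xs i * Real.log (phi B (x s) i / phi B xs i))) := by
  -- notation
  set P : Fin m → ℝ := phi B xs with hP
  have hPpos : ∀ i, 0 < P i := fun i => Finset.prod_pos fun j _ => Real.rpow_pos_of_pos (hxs j) _
  have hphipos : ∀ t ∈ I, ∀ i, 0 < phi B (x t) i := fun t ht i =>
    Finset.prod_pos fun j _ => Real.rpow_pos_of_pos (hpos t ht j) _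
  -- r t j = lam j + (A φ(x t))_j
  set r : ℝ → Fin n → ℝ := fun t j => lam j + ∑ k, A j k * phi B (x t) k with hr
  -- equilibrium: r rewritten
  have hreq : ∀ t ∈ I, ∀ j, r t j = ∑ k, A j k * (phi B (x t) k - P k) := by
    intro t ht j
    have h0 : lam j + ∑ k, A j k * P k = 0 := by
      have := heq j
      rcases mul_eq_zero.1 this with h | h
      · exact absurd h (hxs j).ne'
      · exact h
    simp only [hr, mul_sub, Finset.sum_sub_distrib]
    linarith
  -- derivative of log (x s j)
  have hlog : ∀ t ∈ I, ∀ j, HasDerivWithinAt (fun s => Real.log (x s j)) (r t j) I t := by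
    intro t ht j
    have := (hsol t ht j).log (hpos t ht j).ne'
    simpa [mul_div_assoc, mul_div_cancel_left₀ _ (hpos t ht j).ne'] using this
  -- g i s = ∑ j, log (x s j) * B i j
  have hg : ∀ t ∈ I, ∀ i, HasDerivWithinAt
      (fun s => ∑ j, Real.log (x s j) * B i j) (∑ j, r t j * B i j) I t := by
    intro t ht i
    exact HasDerivWithinAt.fun_sum fun j _ => (hlog t ht j).mul_const _
  -- phi = exp g on I
  have hphi_eq : ∀ s ∈ I, ∀ i,
      phi B (x s) i = Real.exp (∑ j, Real.log (x s j) * B i j) := by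
    intro s hs i
    rw [Real.exp_sum]
    exact Finset.prod_congr rfl fun j _ => Real.rpow_def_of_pos (hpos s hs j) _
  -- derivative of phi
  have hphid : ∀ t ∈ I, ∀ i, HasDerivWithinAt (fun s => phi B (x s) i)
      (phi B (x t) i * (∑ j, r t j * B i j)) I t := by
    intro t ht i
    have := (hg t ht i).exp
    rw [← hphi_eq t ht i] at this
    exact this.congr (fun s hs => hphi_eq s hs i) (hphi_eq t ht i)
  -- W and its derivative
  set W : ℝ → ℝ := fun s => ∑ i, c i * (phi B (x s) i - P i -
      P i * Real.log (phi B (x s) i / P i)) with hW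
  set W' : ℝ → ℝ := fun t => ∑ i, c i * (phi B (x t) i - P i) * (∑ j, r t j * B i j) with hW'
  have hWd : ∀ t ∈ I, HasDerivWithinAt W (W' t) I t := by
    intro t ht
    apply HasDerivWithinAt.fun_sum
    intro i _
    -- rewrite summand via logs
    have hlogrw : ∀ s ∈ I, c i * (phi B (x s) i - P i -
        P i * Real.log (phi B (x s) i / P i))
        = c i * (phi B (x s) i - P i -
          P i * ((∑ j, Real.log (x s j) * B i j) - Real.log (P i))) := by
      intro s hs
      rw [Real.log_div (hphipos s hs i).ne' (hPpos i).ne', hphi_eq s hs i, Real.log_exp]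
    have hd : HasDerivWithinAt (fun s => c i * (phi B (x s) i - P i -
        P i * ((∑ j, Real.log (x s j) * B i j) - Real.log (P i))))
        (c i * (phi B (x t) i - P i) * (∑ j, r t j * B i j)) I t := by
      have h1 := ((hphid t ht i).sub_const (P i)).fun_sub
        (((hg t ht i).sub_const (Real.log (P i))).const_mul (P i))
      have h2 := h1.const_mul (c i)
      exact h2.congr_deriv (by ring)
    exact hd.congr (fun s hs => hlogrw s hs) (hlogrw t ht)
  -- W' t ≤ 0
  have hW'le : ∀ t ∈ I, W' t ≤ 0 := by
    intro t ht
    set z : Fin m → ℝ := fun k => phi B (x t) k - P k with hz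
    have hG : ∀ i, (∑ j, r t j * B i j) = (B * A).mulVec z i := by
      intro i
      rw [← Matrix.mulVec_mulVec]
      simp only [Matrix.mulVec, dotProduct]
      refine Finset.sum_congr rfl fun j _ => ?_
      rw [hreq t ht j]
      ring
    have : W' t = ∑ i, c i * z i * (B * A).mulVec z i := by
      simp only [hW']
      exact Finset.sum_congr rfl fun i _ => by rw [hG i]
    rw [this]
    exact qp_key (B * A) c z (hneg z)
  -- conclude via antitonicity
  have hconv : Convex ℝ I := convex_iff_ordConnected.2 hI
  have hcont : ContinuousOn W I := fun t ht => (hWd t ht).continuousWithinAt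
  have hanti : AntitoneOn W I := by
    apply antitoneOn_of_hasDerivWithinAt_nonpos hconv hcont
      (f' := W')
    · intro t ht
      exact ((hWd t (interior_subset ht)).mono interior_subset)
    · intro t ht
      exact hW'le t (interior_subset ht)
  intro s hs t ht hst
  exact hanti hs ht hst
end

section
/- Let x* ∈ int(ℝ₊ⁿ) be an equilibrium of the QP system, and suppose there exist c₁,…,c_m > 0 such that, with C = diag(c₁,…,c_m), the matrix C·Q + Qᵀ·C is negative definite. Then along every solution x : I → int(ℝ₊ⁿ) of the QP system, d/dt W(x(t)) < 0 whenever x(t) ≠ x*, where W(x) = Σ_{i=1}^m cᵢ [ φᵢ(x) − φᵢ(x*) − φᵢ(x*)·ln( φᵢ(x)/φᵢ(x*) ) ]. -/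
open Matrix Finset

lemma hasDeriv_phi {n m : ℕ} (B : Matrix (Fin m) (Fin n) ℝ) (x : ℝ → Fin n → ℝ)
    (I : Set ℝ) (t : ℝ) (ht : t ∈ I) (hpos : ∀ s ∈ I, ∀ j, 0 < x s j)
    (x' : Fin n → ℝ) (hx : ∀ j, HasDerivWithinAt (fun s => x s j) (x' j) I t) (i : Fin m) :
    HasDerivWithinAt (fun s => phi B (x s) i)
      (phi B (x t) i * ∑ j, B i j * (x' j / x t j)) I t := by
  set g : ℝ → ℝ := fun s => Real.exp (∑ j, B i j * Real.log (x s j)) with hg_def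
  have hEq : ∀ s ∈ I, phi B (x s) i = g s := by
    intro s hs
    simp only [phi, hg_def, Real.exp_sum]
    exact Finset.prod_congr rfl fun j _ => by
      rw [Real.rpow_def_of_pos (hpos s hs j), mul_comm]
  have hinner : HasDerivWithinAt (fun s => ∑ j, B i j * Real.log (x s j))
      (∑ j, B i j * (x' j / x t j)) I t :=
    HasDerivWithinAt.fun_sum fun j _ => ((hx j).log (hpos t ht j).ne').const_mul _
  have hg : HasDerivWithinAt g (g t * ∑ j, B i j * (x' j / x t j)) I t := by
    simpa [hg_def, mul_comm] using hinner.exp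
  have := hg.congr hEq (hEq t ht)
  rwa [← hEq t ht] at this

lemma mulVec_inj_of_rank {n m : ℕ} (B : Matrix (Fin m) (Fin n) ℝ) (hB : B.rank = n) :
    Function.Injective B.mulVec := by
  have h := B.mulVecLin.finrank_range_add_finrank_ker
  have hr : Module.finrank ℝ (LinearMap.range B.mulVecLin) = n := hB
  have hd : Module.finrank ℝ (Fin n → ℝ) = n := by simp
  have hk : Module.finrank ℝ (LinearMap.ker B.mulVecLin) = 0 := by omega
  have hbot : LinearMap.ker B.mulVecLin = ⊥ := Submodule.finrank_eq_zero.mp hk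
  exact LinearMap.ker_eq_bot.mp hbot

lemma quad_form_eq {m : ℕ} (c : Fin m → ℝ) (Q : Matrix (Fin m) (Fin m) ℝ)
    (v : Fin m → ℝ) :
    v ⬝ᵥ ((Matrix.diagonal c * Q + Qᵀ * Matrix.diagonal c).mulVec v)
      = 2 * ∑ i, c i * v i * Q.mulVec v i := by
  rw [Matrix.add_mulVec, dotProduct_add]
  have h1 : v ⬝ᵥ (Matrix.diagonal c * Q).mulVec v = ∑ i, c i * v i * Q.mulVec v i := by
    rw [← Matrix.mulVec_mulVec]
    simp only [dotProduct, Matrix.mulVec_diagonal]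
    exact Finset.sum_congr rfl fun i _ => by ring
  have h2 : v ⬝ᵥ (Qᵀ * Matrix.diagonal c).mulVec v = ∑ i, c i * v i * Q.mulVec v i := by
    rw [← Matrix.mulVec_mulVec, Matrix.dotProduct_mulVec, Matrix.vecMul_transpose]
    simp only [dotProduct, Matrix.mulVec_diagonal]
    exact Finset.sum_congr rfl fun i _ => by ring
  rw [h1, h2]; ring

/-- If `x* ∈ int(ℝ₊ⁿ)` is an equilibrium of the QP system and `C·Q + Qᵀ·C` is
negative definite for some positive diagonal `C = diag(c)` (`Q = B·A`), then along
every solution `x : I → int(ℝ₊ⁿ)` one has `d/dt W(x(t)) < 0` whenever `x(t) ≠ x*`,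
where `W(x) = ∑ᵢ cᵢ (φᵢ(x) − φᵢ(x*) − φᵢ(x*)·ln(φᵢ(x)/φᵢ(x*)))`. -/
theorem qp_liapunov_strict_decrease {n m : ℕ} (hmn : n ≤ m)
    (A : Matrix (Fin n) (Fin m) ℝ) (B : Matrix (Fin m) (Fin n) ℝ)
    (hB : B.rank = n) (lam : Fin n → ℝ)
    (xs : Fin n → ℝ) (hxs : ∀ i, 0 < xs i)
    (heq : ∀ i, xs i * (lam i + ∑ j, A i j * phi B xs j) = 0)
    (c : Fin m → ℝ) (hc : ∀ i, 0 < c i)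
    (hneg : ∀ v : Fin m → ℝ, v ≠ 0 →
      v ⬝ᵥ ((Matrix.diagonal c * (B * A) + (B * A)ᵀ * Matrix.diagonal c).mulVec v) < 0)
    (I : Set ℝ) (hI : I.OrdConnected) (x : ℝ → (Fin n → ℝ))
    (hpos : ∀ t ∈ I, ∀ i, 0 < x t i)
    (hsol : ∀ t ∈ I, ∀ i, HasDerivWithinAt (fun s => x s i)
      (x t i * (lam i + ∑ j, A i j * phi B (x t) j)) I t) :
    ∀ t ∈ I, x t ≠ xs →
      ∃ d : ℝ, d < 0 ∧
        HasDerivWithinAt (fun s => ∑ i, c i * (phi B (x s) i - phi B xs i -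
          phi B xs i * Real.log (phi B (x s) i / phi B xs i))) d I t := by
  intro t ht hne
  have hupos : ∀ j, 0 < x t j := hpos t ht
  have hphis : ∀ i, 0 < phi B xs i := fun i =>
    Finset.prod_pos fun j _ => Real.rpow_pos_of_pos (hxs j) _
  have hphiu : ∀ i, 0 < phi B (x t) i := fun i =>
    Finset.prod_pos fun j _ => Real.rpow_pos_of_pos (hupos j) _
  -- equilibrium relation
  have hlam : ∀ i, lam i + ∑ j, A i j * phi B xs j = 0 := fun i => by
    have h := heq i
    have := (hxs i).ne'
    exact (mul_eq_zero.mp h).resolve_left this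
  set z : Fin m → ℝ := fun i => phi B (x t) i - phi B xs i with hz_def
  -- z ≠ 0
  have hz : z ≠ 0 := by
    intro h0
    apply hne
    have hphieq : ∀ i, phi B (x t) i = phi B xs i := by
      intro i
      have := congrFun h0 i
      simpa [hz_def, sub_eq_zero] using this
    have hlog : B.mulVec (fun j => Real.log (x t j) - Real.log (xs j)) = 0 := by
      funext i
      have h1 : Real.log (phi B (x t) i) = ∑ j, B i j * Real.log (x t j) := by
        rw [phi, Real.log_prod fun j _ => (Real.rpow_pos_of_pos (hupos j) _).ne']
        exact Finset.sum_congr rfl fun j _ => Real.log_rpow (hupos j) _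
      have h2 : Real.log (phi B xs i) = ∑ j, B i j * Real.log (xs j) := by
        rw [phi, Real.log_prod fun j _ => (Real.rpow_pos_of_pos (hxs j) _).ne']
        exact Finset.sum_congr rfl fun j _ => Real.log_rpow (hxs j) _
      have : (∑ j, B i j * Real.log (x t j)) = ∑ j, B i j * Real.log (xs j) := by
        rw [← h1, ← h2, hphieq i]
      simp only [Matrix.mulVec, dotProduct, Pi.zero_apply, mul_sub,
        Finset.sum_sub_distrib]
      rw [this]; ring
    have hinj := mulVec_inj_of_rank B hB
    have hw : (fun j => Real.log (x t j) - Real.log (xs j)) = 0 := by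
      apply hinj
      rw [hlog, Matrix.mulVec_zero]
    funext j
    have := congrFun hw j
    have hlogeq : Real.log (x t j) = Real.log (xs j) := by
      simpa [sub_eq_zero] using this
    have := congrArg Real.exp hlogeq
    rwa [Real.exp_log (hupos j), Real.exp_log (hxs j)] at this
  -- derivative of phi along the solution
  set Q : Matrix (Fin m) (Fin m) ℝ := B * A with hQ_def
  set D : Fin m → ℝ := fun i => phi B (x t) i * Q.mulVec z i with hD_def
  have hD : ∀ i, HasDerivWithinAt (fun s => phi B (x s) i) (D i) I t := by
    intro i
    have h := hasDeriv_phi B x I t ht hpos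
      (fun j => x t j * (lam j + ∑ k, A j k * phi B (x t) k))
      (fun j => hsol t ht j) i
    have hdivval : ∀ j, (x t j * (lam j + ∑ k, A j k * phi B (x t) k)) / x t j
        = lam j + ∑ k, A j k * phi B (x t) k := fun j =>
      mul_div_cancel_left₀ _ (hupos j).ne'
    have hEval : (∑ j, B i j * ((x t j * (lam j + ∑ k, A j k * phi B (x t) k)) / x t j))
        = Q.mulVec z i := by
      rw [Finset.sum_congr rfl fun j _ => by rw [hdivval j]]
      have hlam' : ∀ j, lam j + ∑ k, A j k * phi B (x t) k = ∑ k, A j k * z k := by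
        intro j
        have := hlam j
        simp only [hz_def, mul_sub, Finset.sum_sub_distrib]
        linarith [this]
      rw [Finset.sum_congr rfl fun j _ => by rw [hlam' j]]
      simp only [hQ_def, Matrix.mulVec, dotProduct, Matrix.mul_apply,
        Finset.sum_mul, Finset.mul_sum]
      rw [Finset.sum_comm]
      exact Finset.sum_congr rfl fun j _ => Finset.sum_congr rfl fun k _ => by ring
    rw [hEval] at h
    exact h
  -- assemble the derivative of W
  refine ⟨∑ i, c i * (D i - phi B xs i *
      ((D i / phi B xs i) / (phi B (x t) i / phi B xs i))), ?_, ?_⟩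
  · -- negativity
    have hterm : ∀ i, c i * (D i - phi B xs i *
        ((D i / phi B xs i) / (phi B (x t) i / phi B xs i)))
        = c i * z i * Q.mulVec z i := by
      intro i
      have ha := (hphiu i).ne'
      have hb := (hphis i).ne'
      rw [hD_def]
      simp only [hz_def]
      field_simp
    rw [Finset.sum_congr rfl fun i _ => hterm i]
    have hq := hneg z hz
    rw [quad_form_eq c Q z] at hq
    linarith
  · apply HasDerivWithinAt.fun_sum
    intro i _
    have hne0 : phi B (x t) i / phi B xs i ≠ 0 :=
      div_ne_zero (hphiu i).ne' (hphis i).ne'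
    exact ((((hD i).sub_const (phi B xs i)).sub
      ((((hD i).div_const (phi B xs i)).log hne0).const_mul (phi B xs i))).const_mul (c i))
end

section
/- Let x* ∈ int(ℝ₊ⁿ) be an equilibrium of the QP system, let c₁,…,c_m > 0, C = diag(c₁,…,c_m), and suppose (φ(x) − φ(x*))ᵀ (C·Q + Qᵀ·C) (φ(x) − φ(x*)) = 0 for all x ∈ int(ℝ₊ⁿ). Then W(x) = Σ_{i=1}^m cᵢ [ φᵢ(x) − φᵢ(x*) − φᵢ(x*)·ln( φᵢ(x)/φᵢ(x*) ) ] is a first integral: for every solution x : I → int(ℝ₊ⁿ) of the QP system, the function t ↦ W(x(t)) is constant on I. -/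
open Matrix Finset

theorem quad_aux {m : ℕ} (c : Fin m → ℝ) (Q : Matrix (Fin m) (Fin m) ℝ) (d : Fin m → ℝ) :
    d ⬝ᵥ ((Matrix.diagonal c * Q + Qᵀ * Matrix.diagonal c) *ᵥ d)
      = 2 * ∑ i, c i * (d i * (Q *ᵥ d) i) := by
  simp only [Matrix.mulVec, dotProduct, Matrix.add_apply,
    Matrix.diagonal_mul, Matrix.mul_diagonal, Matrix.transpose_apply, Matrix.of_apply,
    Finset.mul_sum]
  have h1 : (∑ i, ∑ j, d i * ((c i * Q i j + Q j i * c j) * d j))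
      = (∑ i, ∑ j, c i * d i * Q i j * d j) + ∑ i, ∑ j, c j * d j * Q j i * d i := by
    rw [← Finset.sum_add_distrib]
    refine Finset.sum_congr rfl fun i _ => ?_
    rw [← Finset.sum_add_distrib]
    exact Finset.sum_congr rfl fun j _ => by ring
  rw [h1, Finset.sum_comm (s := Finset.univ) (t := Finset.univ)
    (f := fun i j => c j * d j * Q j i * d i),
    ← two_mul (∑ i, ∑ j, c i * d i * Q i j * d j), Finset.mul_sum]
  refine Finset.sum_congr rfl fun i _ => ?_
  rw [Finset.mul_sum]
  exact Finset.sum_congr rfl fun j _ => by ring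

/-- If `x* ∈ int(ℝ₊ⁿ)` is an equilibrium of the QP system and the quadratic form
`(φ(x) − φ(x*))ᵀ (C·Q + Qᵀ·C) (φ(x) − φ(x*))` vanishes identically on `int(ℝ₊ⁿ)`
(`Q = B·A`, `C = diag(c)` with `cᵢ > 0`), then
`W(x) = ∑ᵢ cᵢ (φᵢ(x) − φᵢ(x*) − φᵢ(x*)·ln(φᵢ(x)/φᵢ(x*)))` is a first integral:
`t ↦ W(x(t))` is constant along every solution `x : I → int(ℝ₊ⁿ)`. -/
theorem qp_liapunov_first_integral {n m : ℕ} (hmn : n ≤ m)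
    (A : Matrix (Fin n) (Fin m) ℝ) (B : Matrix (Fin m) (Fin n) ℝ)
    (hB : B.rank = n) (lam : Fin n → ℝ)
    (xs : Fin n → ℝ) (hxs : ∀ i, 0 < xs i)
    (heq : ∀ i, xs i * (lam i + ∑ j, A i j * phi B xs j) = 0)
    (c : Fin m → ℝ) (hc : ∀ i, 0 < c i)
    (hzero : ∀ y : Fin n → ℝ, (∀ i, 0 < y i) →
      (phi B y - phi B xs) ⬝ᵥ
        ((Matrix.diagonal c * (B * A) + (B * A)ᵀ * Matrix.diagonal c).mulVec
          (phi B y - phi B xs)) = 0)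
    (I : Set ℝ) (hI : I.OrdConnected) (x : ℝ → (Fin n → ℝ))
    (hpos : ∀ t ∈ I, ∀ i, 0 < x t i)
    (hsol : ∀ t ∈ I, ∀ i, HasDerivWithinAt (fun s => x s i)
      (x t i * (lam i + ∑ j, A i j * phi B (x t) j)) I t) :
    ∀ s ∈ I, ∀ t ∈ I,
      (∑ i, c i * (phi B (x s) i - phi B xs i -
        phi B xs i * Real.log (phi B (x s) i / phi B xs i))) =
      (∑ i, c i * (phi B (x t) i - phi B xs i -
        phi B xs i * Real.log (phi B (x t) i / phi B xs i))) := by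
  -- positivity of quasimonomials
  have hphixs : ∀ i, 0 < phi B xs i := fun i =>
    Finset.prod_pos fun j _ => Real.rpow_pos_of_pos (hxs j) _
  -- equilibrium relation
  have hlam : ∀ j, lam j = - ∑ k, A j k * phi B xs k := by
    intro j
    have h := heq j
    rcases mul_eq_zero.1 h with h' | h'
    · exact absurd h' (hxs j).ne'
    · linarith
  -- the log-linear coordinates
    -- L i t = ∑ j, log (x t j) * B i j
  set L : Fin m → ℝ → ℝ := fun i t => ∑ j, Real.log (x t j) * B i j with hLdef
  have hphiL : ∀ t, (∀ j, 0 < x t j) → ∀ i, phi B (x t) i = Real.exp (L i t) := by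
    intro t ht i
    simp only [phi, hLdef, Real.exp_sum]
    exact Finset.prod_congr rfl fun j _ => Real.rpow_def_of_pos (ht j) _
  -- the smooth representative of W
  set g : ℝ → ℝ := fun t => ∑ i, c i * (Real.exp (L i t) - phi B xs i -
      phi B xs i * (L i t - Real.log (phi B xs i))) with hgdef
  -- W ∘ x agrees with g on I
  have hWg : ∀ t ∈ I,
      (∑ i, c i * (phi B (x t) i - phi B xs i -
        phi B xs i * Real.log (phi B (x t) i / phi B xs i))) = g t := by
    intro t ht
    refine Finset.sum_congr rfl fun i _ => ?_
    rw [hphiL t (hpos t ht) i, Real.log_div (Real.exp_ne_zero _) (hphixs i).ne',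
      Real.log_exp]
  -- derivative of g vanishes on I
  have hderiv : ∀ t ∈ I, HasDerivWithinAt g 0 I t := by
    intro t ht
    set d : Fin m → ℝ := phi B (x t) - phi B xs with hddef
    set rho : Fin m → ℝ := fun i => ((B * A) *ᵥ d) i with hrhodef
    -- derivative of L i
    have hLder : ∀ i, HasDerivWithinAt (L i) (rho i) I t := by
      intro i
      have h1 : ∀ j : Fin n, HasDerivWithinAt (fun s => Real.log (x s j) * B i j)
          ((lam j + ∑ k, A j k * phi B (x t) k) * B i j) I t := by
        intro j
        have hlog : HasDerivWithinAt (fun s => Real.log (x s j))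
            ((x t j * (lam j + ∑ k, A j k * phi B (x t) k)) / x t j) I t :=
          (hsol t ht j).log (hpos t ht j).ne'
        rw [mul_div_cancel_left₀ _ (hpos t ht j).ne'] at hlog
        exact hlog.mul_const _
      have h2 := HasDerivWithinAt.fun_sum (u := Finset.univ) (fun j _ => h1 j)
      have h3 : (∑ j, (lam j + ∑ k, A j k * phi B (x t) k) * B i j) = rho i := by
        simp only [hrhodef, Matrix.mulVec, dotProduct, Matrix.mul_apply,
          hddef, Pi.sub_apply, Finset.sum_mul]
        rw [Finset.sum_comm (s := Finset.univ) (t := Finset.univ)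
          (f := fun k j => B i j * A j k * (phi B (x t) k - phi B xs k))]
        refine Finset.sum_congr rfl fun j _ => ?_
        rw [hlam j]
        rw [show (-∑ k, A j k * phi B xs k) + ∑ k, A j k * phi B (x t) k
            = ∑ k, A j k * (phi B (x t) k - phi B xs k) from by
          rw [neg_add_eq_sub, ← Finset.sum_sub_distrib]
          exact Finset.sum_congr rfl fun k _ => by ring]
        rw [Finset.sum_mul]
        exact Finset.sum_congr rfl fun k _ => by ring
      rw [← h3]
      exact h2
    -- derivative of g
    have hgder : HasDerivWithinAt g
        (∑ i, c i * (Real.exp (L i t) * rho i - phi B xs i * rho i)) I t := by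
      refine HasDerivWithinAt.fun_sum fun i _ => ?_
      have h1 : HasDerivWithinAt (fun s => Real.exp (L i s) - phi B xs i)
          (Real.exp (L i t) * rho i) I t := ((hLder i).exp).sub_const _
      have h2 : HasDerivWithinAt (fun s => phi B xs i * (L i s - Real.log (phi B xs i)))
          (phi B xs i * rho i) I t := ((hLder i).sub_const _).const_mul _
      exact (h1.sub h2).const_mul _
    -- the derivative is zero
    have hval : (∑ i, c i * (Real.exp (L i t) * rho i - phi B xs i * rho i)) = 0 := by
      have hz := hzero (x t) (hpos t ht)
      rw [quad_aux c (B * A) (phi B (x t) - phi B xs)] at hz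
      have h2 : (∑ i, c i * (d i * ((B * A) *ᵥ d) i)) = 0 := by
        have : (2:ℝ) ≠ 0 := two_ne_zero
        rw [← hddef] at hz
        exact (mul_eq_zero.1 hz).resolve_left this
      rw [← h2]
      refine Finset.sum_congr rfl fun i _ => ?_
      rw [← hphiL t (hpos t ht) i]
      simp only [hddef, Pi.sub_apply, hrhodef]
      ring
    rw [← hval]
    exact hgder
  -- g is constant on I
  have hconst : ∀ s ∈ I, ∀ t ∈ I, g s = g t := by
    intro s hs t ht
    have := Convex.norm_image_sub_le_of_norm_hasDerivWithin_le
      (f := g) (f' := fun _ => (0:ℝ)) (C := 0) (fun u hu => hderiv u hu)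
      (fun u _ => by simp) hI.convex hs ht
    have h0 : ‖g t - g s‖ ≤ 0 := by simpa using this
    have := norm_le_zero_iff.1 h0
    linarith [sub_eq_zero.1 this]
  intro s hs t ht
  rw [hWg s hs, hWg t ht]
  exact hconst s hs t ht
end

section
/- Let x* ∈ int(ℝ₊ⁿ) be an equilibrium of the Lotka-Volterra system, and suppose there exist c₁,…,c_n > 0 such that, with C = diag(c₁,…,c_n), the matrix C·A + Aᵀ·C is negative semidefinite. Then x* is Lyapunov stable: for every ε > 0 there exists δ > 0 such that every solution x : [0,∞) → int(ℝ₊ⁿ) of the Lotka-Volterra system with ‖x(0) − x*‖ < δ satisfies ‖x(t) − x*‖ < ε for all t ≥ 0. -/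
open Matrix Finset

private lemma lv_log_ineq {a u : ℝ} (ha : 0 < a) (hu : 0 < u) :
    a * (Real.log u - Real.log a) ≤ u - a := by
  have h := Real.log_le_sub_one_of_pos (div_pos hu ha)
  rw [Real.log_div hu.ne' ha.ne'] at h
  have h3 := mul_le_mul_of_nonneg_left h ha.le
  have h4 : a * (u / a - 1) = u - a := by field_simp
  linarith

private lemma lv_log_ineq_strict {a u : ℝ} (ha : 0 < a) (hu : 0 < u) (hne : u ≠ a) :
    a * (Real.log u - Real.log a) < u - a := by
  have hdne : u / a ≠ 1 := by
    intro h
    exact hne (by field_simp at h; linarith)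
  have h := Real.log_lt_sub_one_of_pos (div_pos hu ha) hdne
  rw [Real.log_div hu.ne' ha.ne'] at h
  have h3 := mul_lt_mul_of_pos_left h ha
  have h4 : a * (u / a - 1) = u - a := by field_simp
  linarith

/-- If `x* ∈ int(ℝ₊ⁿ)` is an equilibrium of the Lotka–Volterra system
`ẋᵢ = xᵢ (λᵢ + ∑ⱼ Aᵢⱼ xⱼ)` and there are `cᵢ > 0` with `C = diag(c)` such that
`C·A + Aᵀ·C` is negative semidefinite, then `x*` is Lyapunov stable. -/
theorem lv_stability {n : ℕ}
    (A : Matrix (Fin n) (Fin n) ℝ) (lam : Fin n → ℝ)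
    (xs : Fin n → ℝ) (hxs : ∀ i, 0 < xs i)
    (heq : ∀ i, xs i * (lam i + ∑ j, A i j * xs j) = 0)
    (c : Fin n → ℝ) (hc : ∀ i, 0 < c i)
    (hneg : ∀ v : Fin n → ℝ,
      v ⬝ᵥ ((Matrix.diagonal c * A + Aᵀ * Matrix.diagonal c).mulVec v) ≤ 0) :
    ∀ ε > 0, ∃ δ > 0, ∀ x : ℝ → (Fin n → ℝ),
      (∀ t ∈ Set.Ici (0 : ℝ), ∀ i, 0 < x t i) →
      (∀ t ∈ Set.Ici (0 : ℝ), ∀ i, HasDerivWithinAt (fun s => x s i)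
        (x t i * (lam i + ∑ j, A i j * x t j)) (Set.Ici 0) t) →
      ‖x 0 - xs‖ < δ → ∀ t ≥ (0 : ℝ), ‖x t - xs‖ < ε := by
  intro ε hε
  rcases Nat.eq_zero_or_pos n with hn0 | hn
  · refine ⟨ε, hε, fun x _ _ _ t _ => ?_⟩
    subst hn0
    have hz : x t - xs = 0 := funext fun i => i.elim0
    rw [hz, norm_zero]
    exact hε
  -- the quadratic form inequality
  have hDle : ∀ v : Fin n → ℝ, (∑ i, c i * v i * (∑ j, A i j * v j)) ≤ 0 := by
    intro v
    have h := hneg v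
    have hent : ∀ i j, (Matrix.diagonal c * A + Aᵀ * Matrix.diagonal c) i j
        = c i * A i j + A j i * c j := by
      intro i j
      simp [Matrix.add_apply, Matrix.diagonal_mul, Matrix.mul_diagonal, Matrix.transpose_apply]
    have hexp : v ⬝ᵥ ((Matrix.diagonal c * A + Aᵀ * Matrix.diagonal c).mulVec v)
        = (∑ i, ∑ j, v i * (c i * A i j) * v j) + ∑ i, ∑ j, v i * (A j i * c j) * v j := by
      simp only [dotProduct, Matrix.mulVec, hent]
      rw [← Finset.sum_add_distrib]
      refine Finset.sum_congr rfl fun i _ => ?_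
      rw [Finset.mul_sum, ← Finset.sum_add_distrib]
      refine Finset.sum_congr rfl fun j _ => by ring
    have hswap : (∑ i, ∑ j, v i * (A j i * c j) * v j)
        = ∑ i, ∑ j, v i * (c i * A i j) * v j := by
      rw [Finset.sum_comm]
      exact Finset.sum_congr rfl fun i _ => Finset.sum_congr rfl fun j _ => by ring
    have hlhs : (∑ i, c i * v i * (∑ j, A i j * v j))
        = ∑ i, ∑ j, v i * (c i * A i j) * v j := by
      refine Finset.sum_congr rfl fun i _ => ?_
      rw [Finset.mul_sum]
      exact Finset.sum_congr rfl fun j _ => by ring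
    rw [hexp, hswap] at h
    rw [hlhs]
    linarith
  -- the Lyapunov function
  set V : (Fin n → ℝ) → ℝ :=
    fun y => ∑ i, c i * ((y i - xs i) - xs i * (Real.log (y i) - Real.log (xs i))) with hV
  have hVxs : V xs = 0 := by simp [hV]
  have hVpos : ∀ y : Fin n → ℝ, (∀ i, 0 < y i) → y ≠ xs → 0 < V y := by
    intro y hy hne
    obtain ⟨i, hi⟩ := Function.ne_iff.mp hne
    apply Finset.sum_pos'
    · intro j _
      have h1 := lv_log_ineq (hxs j) (hy j)
      have h2 := (hc j).le
      nlinarith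
    · refine ⟨i, Finset.mem_univ i, ?_⟩
      have h1 := lv_log_ineq_strict (hxs i) (hy i) hi
      have h2 := hc i
      nlinarith
  have hVc : ∀ y : Fin n → ℝ, (∀ i, 0 < y i) → ContinuousAt V y := by
    intro y hy
    have hterm : ∀ i ∈ Finset.univ, ContinuousAt
        (fun z : Fin n → ℝ => c i * ((z i - xs i) - xs i * (Real.log (z i) - Real.log (xs i))))
        y := by
      intro i _
      have h1 : ContinuousAt (fun z : Fin n → ℝ => z i) y := (continuous_apply i).continuousAt
      have h2 : ContinuousAt (fun z : Fin n → ℝ => Real.log (z i)) y :=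
        h1.log (hy i).ne'
      exact continuousAt_const.mul
        ((h1.sub continuousAt_const).sub (continuousAt_const.mul (h2.sub continuousAt_const)))
    exact tendsto_finset_sum _ hterm
  -- radius
  haveI : Nonempty (Fin n) := ⟨⟨0, hn⟩⟩
  obtain ⟨i0, -, hmin⟩ := Finset.exists_min_image Finset.univ xs Finset.univ_nonempty
  have hai : ∀ i, xs i0 ≤ xs i := fun i => hmin i (Finset.mem_univ i)
  set ε' := min ε (xs i0) / 2 with hε'def
  have hε'pos : 0 < ε' := by
    have := lt_min hε (hxs i0)
    positivity
  have hε'lt : ε' < ε := by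
    have h1 : min ε (xs i0) ≤ ε := min_le_left _ _
    have : 0 < min ε (xs i0) := lt_min hε (hxs i0)
    rw [hε'def]; linarith
  have hε'lta : ε' < xs i0 := by
    have h1 : min ε (xs i0) ≤ xs i0 := min_le_right _ _
    have : 0 < min ε (xs i0) := lt_min hε (hxs i0)
    rw [hε'def]; linarith
  -- compact sphere and the minimum of V on it
  haveI : Nontrivial (Fin n → ℝ) := Function.nontrivial
  have hKc : IsCompact (Metric.sphere xs ε') := isCompact_sphere xs ε'
  have hKne : (Metric.sphere xs ε').Nonempty := NormedSpace.sphere_nonempty.mpr hε'pos.le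
  have hKpos : ∀ y ∈ Metric.sphere xs ε', ∀ i, 0 < y i := by
    intro y hy i
    have h1 : |y i - xs i| ≤ ‖y - xs‖ := by
      have := norm_le_pi_norm (y - xs) i
      simpa using this
    have h2 : ‖y - xs‖ = ε' := by rw [← dist_eq_norm]; exact hy
    have h3 : ε' < xs i := lt_of_lt_of_le hε'lta (hai i)
    have h4 := (abs_le.mp (h1.trans_eq h2)).1
    linarith
  obtain ⟨y₀, hy₀K, hy₀min⟩ := hKc.exists_isMinOn hKne
    (fun y hy => (hVc y (hKpos y hy)).continuousWithinAt)
  have hy₀ne : y₀ ≠ xs := by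
    intro h
    rw [Metric.mem_sphere, h, dist_self] at hy₀K
    exact hε'pos.ne hy₀K
  have hm : 0 < V y₀ := hVpos y₀ (hKpos _ hy₀K) hy₀ne
  -- choose δ by continuity of V at xs
  obtain ⟨δ₀, hδ₀pos, hδ₀⟩ := Metric.continuousAt_iff.mp (hVc xs hxs) (V y₀) hm
  refine ⟨min δ₀ ε', lt_min hδ₀pos hε'pos, ?_⟩
  intro x hpos hderiv hx0 t ht
  -- derivative of V along the solution
  have hWder : ∀ s ∈ Set.Ici (0 : ℝ), HasDerivWithinAt (fun u => V (x u))
      (∑ i, c i * (x s i - xs i) * (∑ j, A i j * (x s j - xs j))) (Set.Ici 0) s := by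
    intro s hs
    simp only [hV]
    apply HasDerivWithinAt.fun_sum
    intro i _
    have hxi : x s i ≠ 0 := (hpos s hs i).ne'
    have hd := hderiv s hs i
    have hlog := hd.log hxi
    have hL : lam i + ∑ j, A i j * x s j = ∑ j, A i j * (x s j - xs j) := by
      have h0 : lam i + ∑ j, A i j * xs j = 0 := by
        rcases mul_eq_zero.mp (heq i) with h | h
        · exact absurd h (hxs i).ne'
        · exact h
      simp only [mul_sub, Finset.sum_sub_distrib]
      linarith
    have h1 : HasDerivWithinAt
        (fun u => c i * ((x u i - xs i) - xs i * (Real.log (x u i) - Real.log (xs i))))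
        (c i * ((x s i * (lam i + ∑ j, A i j * x s j))
          - xs i * ((x s i * (lam i + ∑ j, A i j * x s j)) / x s i)))
        (Set.Ici 0) s :=
      ((hd.sub_const _).sub ((hlog.sub_const _).const_mul _)).const_mul _
    have heqv : c i * ((x s i * (lam i + ∑ j, A i j * x s j))
          - xs i * ((x s i * (lam i + ∑ j, A i j * x s j)) / x s i))
        = c i * (x s i - xs i) * (∑ j, A i j * (x s j - xs j)) := by
      rw [mul_div_cancel_left₀ _ hxi, hL]
      ring
    rw [← heqv]
    exact h1
  -- V is antitone along the solution
  have hWcont : ContinuousOn (fun u => V (x u)) (Set.Ici 0) :=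
    fun s hs => (hWder s hs).continuousWithinAt
  have hderivat : ∀ s ∈ interior (Set.Ici (0 : ℝ)), HasDerivAt (fun u => V (x u))
      (∑ i, c i * (x s i - xs i) * (∑ j, A i j * (x s j - xs j))) s := by
    rw [interior_Ici]
    intro s hs
    exact (hWder s (Set.mem_Ici.mpr (le_of_lt (Set.mem_Ioi.mp hs)))).hasDerivAt (Ici_mem_nhds (Set.mem_Ioi.mp hs))
  have hanti : AntitoneOn (fun u => V (x u)) (Set.Ici 0) := by
    apply antitoneOn_of_deriv_nonpos (convex_Ici 0) hWcont
    · intro s hs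
      exact ((hderivat s hs).differentiableAt).differentiableWithinAt
    · intro s hs
      rw [(hderivat s hs).deriv]
      exact hDle _
  -- V (x 0) < m
  have hV0 : V (x 0) < V y₀ := by
    have hd1 : dist (x 0) xs < δ₀ := by
      rw [dist_eq_norm]
      exact lt_of_lt_of_le hx0 (min_le_left _ _)
    have := hδ₀ hd1
    rw [hVxs, Real.dist_eq, sub_zero] at this
    exact lt_of_le_of_lt (le_abs_self _) this
  -- main argument by contradiction via IVT
  by_contra hcon
  push_neg at hcon
  have hft : ε' ≤ ‖x t - xs‖ := le_trans hε'lt.le hcon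
  have hxcont : ContinuousOn x (Set.Ici 0) :=
    continuousOn_pi.mpr fun i s hs => (hderiv s hs i).continuousWithinAt
  have hcont2 : ContinuousOn (fun s => ‖x s - xs‖) (Set.Icc 0 t) :=
    ((hxcont.mono Set.Icc_subset_Ici_self).sub continuousOn_const).norm
  have hmem : ε' ∈ Set.Icc (‖x 0 - xs‖) (‖x t - xs‖) :=
    ⟨le_of_lt (lt_of_lt_of_le hx0 (min_le_right _ _)), hft⟩
  obtain ⟨s, hsIcc, hs⟩ := intermediate_value_Icc ht hcont2 hmem
  have hs0 : (0 : ℝ) ≤ s := hsIcc.1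
  have hsK : x s ∈ Metric.sphere xs ε' := by
    rw [Metric.mem_sphere, dist_eq_norm]
    exact hs
  have h1 : V y₀ ≤ V (x s) := hy₀min hsK
  have h2 : V (x s) ≤ V (x 0) := hanti Set.self_mem_Ici hs0 hs0
  linarith
end
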